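/- arXiv:2604.10901 — 7 statements merged into one kernel-verified Lean document; each statement's English description precedes it below -/
import Mathlib

section
/- Let s > 1 be an integer and let 5 ≤ p₁ < p₂ < ⋯ < p_s be prime numbers. Let u be an integer with gcd(u, p₁p₂⋯p_s) = 1 and let v be an arbitrary integer. Then there exists an integer n with 0 ≤ n < (s+4)·2^(s-2) such that gcd(un + v, p₁p₂⋯p_s) = 1. -/
/-!
A sieve with remainder: if no prime of a finite set `P` divides `a`, then the number of `t < m`
for which `a * t + b` has no prime factor in `P` is `m * ∏_{q ∈ P} (1 - 1/q)` up to an error of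
at most `2 ^ #P - 1`. Adding a prime `q` to `P` removes one residue class modulo `q`, i.e. an
arithmetic progression of about `m / q` terms along which `a * t + b` is again a linear form whose
leading coefficient is prime to `P`, so the error at most doubles and gains `1`.

For the theorem, `p i ≥ 2 i + 3` (odd primes from `5` on), and
`(s + 4) * ∏_{i ≤ s} (1 - 1/(2i + 3))` is nondecreasing in `s` and exceeds `4` at `s = 2`; hence
with `m = (s + 4) * 2 ^ (s - 2)` the main term exceeds `2 ^ s`, and the sifted set is nonempty.
-/

open Finset

def sifted (P : Finset ℕ) (a b : ℤ) (m : ℕ) : Finset ℕ :=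
  (range m).filter fun t => ∀ q ∈ P, ¬ (q : ℤ) ∣ a * t + b

lemma exists_lt_dvd_iff_mod_eq {q : ℕ} (hq : q.Prime) {a : ℤ} (ha : ¬ (q : ℤ) ∣ a) (b : ℤ) :
    ∃ t₀ < q, ∀ t : ℕ, (q : ℤ) ∣ a * t + b ↔ t % q = t₀ := by
  have : Fact q.Prime := ⟨hq⟩
  have ha' : (a : ZMod q) ≠ 0 := by rwa [Ne, ZMod.intCast_zmod_eq_zero_iff_dvd]
  refine ⟨(-b / a : ZMod q).val, ZMod.val_lt _, fun t => ?_⟩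
  rw [← ZMod.intCast_zmod_eq_zero_iff_dvd, ← Nat.mod_eq_of_lt (ZMod.val_lt (-b / a : ZMod q)),
    ← ZMod.natCast_eq_natCast_iff', ZMod.natCast_zmod_val, eq_div_iff ha']
  push_cast
  constructor <;> intro h <;> linear_combination h

lemma lt_ceilDiv_sub_iff {q : ℕ} (hq : 0 < q) (m t₀ j : ℕ) :
    j < (m - t₀) ⌈/⌉ q ↔ t₀ + q * j < m := by
  rw [← not_le, ceilDiv_le_iff_le_mul hq]
  omega

lemma abs_ceilDiv_sub_sub_div_le {q t₀ : ℕ} (ht₀ : t₀ < q) (m : ℕ) :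
    |(((m - t₀) ⌈/⌉ q : ℕ) : ℚ) - m / q| ≤ 1 := by
  have hq : 0 < q := by omega
  set k := (m - t₀) ⌈/⌉ q
  have hlow : m ≤ t₀ + q * k := by
    have := lt_ceilDiv_sub_iff hq m t₀ k
    omega
  have hup : q * k < m + q := by
    rcases Nat.eq_zero_or_pos k with hk | hk
    · rw [hk]; omega
    · have := (lt_ceilDiv_sub_iff hq m t₀ (k - 1)).1 (by omega)
      have : q * k = q * (k - 1) + q := by
        rw [← Nat.mul_succ]; congr 1; omega
      omega
  have hq' : (0 : ℚ) < q := by exact_mod_cast hq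
  have hlow' : (m : ℚ) < q * k + q := by exact_mod_cast (by omega : m < q * k + q)
  have hup' : (q : ℚ) * k < m + q := by exact_mod_cast hup
  rw [show (k : ℚ) - m / q = (q * k - m) / q by field_simp, abs_div, abs_of_pos hq',
    div_le_one hq', abs_le]
  constructor <;> linarith

lemma prod_one_sub_inv_mem_Icc {ι : Type*} (s : Finset ι) (f : ι → ℕ) (hf : ∀ i ∈ s, 1 ≤ f i) :
    ∏ i ∈ s, (1 - (f i : ℚ)⁻¹) ∈ Set.Icc 0 1 := by
  have hfactor : ∀ i ∈ s, (f i : ℚ)⁻¹ ∈ Set.Icc 0 1 := fun i hi =>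
    ⟨by positivity, inv_le_one_of_one_le₀ (by exact_mod_cast hf i hi)⟩
  exact ⟨prod_nonneg fun i hi => by linarith [(hfactor i hi).2],
    prod_le_one (fun i hi => by linarith [(hfactor i hi).2])
      fun i hi => by linarith [(hfactor i hi).1]⟩

lemma prod_one_sub_inv_le_prod_one_sub_inv {ι : Type*} (s : Finset ι) {f g : ι → ℕ}
    (hf : ∀ i ∈ s, 1 ≤ f i) (hfg : ∀ i ∈ s, f i ≤ g i) :
    ∏ i ∈ s, (1 - (f i : ℚ)⁻¹) ≤ ∏ i ∈ s, (1 - (g i : ℚ)⁻¹) := by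
  refine prod_le_prod (fun i hi => ?_) fun i hi => ?_
  · simpa using (prod_one_sub_inv_mem_Icc {i} f (by simpa using hf i hi)).1
  · have hfi : (0 : ℚ) < f i := by exact_mod_cast hf i hi
    gcongr
    exact_mod_cast hfg i hi

lemma sifted_insert (P : Finset ℕ) (q : ℕ) (a b : ℤ) (m : ℕ) :
    sifted (insert q P) a b m = (sifted P a b m).filter fun t : ℕ => ¬ (q : ℤ) ∣ a * t + b := by
  ext t
  simp only [sifted, mem_filter, forall_mem_insert]
  tauto

lemma filter_dvd_sifted_eq_image (P : Finset ℕ) {q t₀ : ℕ} {a b : ℤ} (ht₀ : t₀ < q)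
    (hchar : ∀ t : ℕ, (q : ℤ) ∣ a * t + b ↔ t % q = t₀) (m : ℕ) :
    (sifted P a b m).filter (fun t : ℕ => (q : ℤ) ∣ a * t + b) =
      (sifted P (a * q) (a * t₀ + b) ((m - t₀) ⌈/⌉ q)).image (t₀ + q * ·) := by
  have hq : 0 < q := by omega
  have hform : ∀ j : ℕ, a * ((t₀ + q * j : ℕ) : ℤ) + b = a * q * j + (a * t₀ + b) := fun j => by
    push_cast; ring
  ext t
  simp only [sifted, mem_filter, mem_image, mem_range, lt_ceilDiv_sub_iff hq, hchar]
  constructor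
  · rintro ⟨⟨htm, hcoprime⟩, hmod⟩
    have ht : t₀ + q * (t / q) = t := by rw [← hmod, Nat.mod_add_div]
    exact ⟨t / q, ⟨by rwa [ht], fun r hr => by rw [← hform, ht]; exact hcoprime r hr⟩, ht⟩
  · rintro ⟨j, ⟨hjm, hcoprime⟩, rfl⟩
    refine ⟨⟨hjm, fun r hr => by rw [hform]; exact hcoprime r hr⟩, ?_⟩
    rw [Nat.add_mul_mod_self_left, Nat.mod_eq_of_lt ht₀]

lemma card_sifted_insert (P : Finset ℕ) {q t₀ : ℕ} {a b : ℤ} (ht₀ : t₀ < q)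
    (hchar : ∀ t : ℕ, (q : ℤ) ∣ a * t + b ↔ t % q = t₀) (m : ℕ) :
    #(sifted (insert q P) a b m) + #(sifted P (a * q) (a * t₀ + b) ((m - t₀) ⌈/⌉ q)) =
      #(sifted P a b m) := by
  have hinj : Function.Injective (t₀ + q * ·) := fun i j h =>
    Nat.eq_of_mul_eq_mul_left (by omega) (Nat.add_left_cancel h)
  rw [sifted_insert, ← card_image_of_injective (sifted P _ _ _) hinj,
    ← filter_dvd_sifted_eq_image P ht₀ hchar, add_comm, card_filter_add_card_filter_not]

theorem abs_card_sifted_sub_le (P : Finset ℕ) (hP : ∀ q ∈ P, q.Prime) (a b : ℤ)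
    (ha : ∀ q ∈ P, ¬ (q : ℤ) ∣ a) (m : ℕ) :
    |(#(sifted P a b m) : ℚ) - m * ∏ q ∈ P, (1 - (q : ℚ)⁻¹)| ≤ 2 ^ #P - 1 := by
  induction P using Finset.induction_on generalizing a b m with
  | empty => simp [sifted]
  | @insert q P hqP ih =>
    rw [forall_mem_insert] at hP ha
    obtain ⟨t₀, ht₀, hchar⟩ := exists_lt_dvd_iff_mod_eq hP.1 ha.1 b
    have haq : ∀ r ∈ P, ¬ (r : ℤ) ∣ a * q := fun r hr hdvd => by
      rcases (Nat.prime_iff_prime_int.mp (hP.2 r hr)).dvd_mul.mp hdvd with h | h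
      · exact ha.2 r hr h
      · have := (Nat.prime_dvd_prime_iff_eq (hP.2 r hr) hP.1).mp (Int.natCast_dvd_natCast.mp h)
        exact hqP (this ▸ hr)
    rw [prod_insert hqP, card_insert_of_notMem hqP, pow_succ]
    set m' := (m - t₀) ⌈/⌉ q
    set Pr := ∏ r ∈ P, (1 - (r : ℚ)⁻¹)
    set S := sifted P a b m
    set G := sifted P (a * q) (a * t₀ + b) m'
    have hS : |(#S : ℚ) - m * Pr| ≤ 2 ^ #P - 1 := ih hP.2 a b ha.2 m
    have hG : |(#G : ℚ) - m' * Pr| ≤ 2 ^ #P - 1 := ih hP.2 (a * q) (a * t₀ + b) haq m'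
    have hPr : Pr ∈ Set.Icc 0 1 :=
      prod_one_sub_inv_mem_Icc P (fun r => r) fun r hr => (hP.2 r hr).one_lt.le
    have hm' : |((m' : ℚ) - m / q) * Pr| ≤ 1 := by
      rw [abs_mul, abs_of_nonneg hPr.1]
      exact mul_le_one₀ (abs_ceilDiv_sub_sub_div_le ht₀ m) hPr.1 hPr.2
    have hcard : (#(sifted (insert q P) a b m) : ℚ) = #S - #G := by
      rw [← card_sifted_insert P ht₀ hchar m]
      push_cast
      ring
    have hq : (q : ℚ) ≠ 0 := by exact_mod_cast hP.1.ne_zero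
    rw [hcard]
    calc _ = |(#S - m * Pr) - (#G - m' * Pr) - (m' - m / q) * Pr| := by
          congr 1
          field_simp
          ring
      _ ≤ |(#S : ℚ) - m * Pr| + |(#G : ℚ) - m' * Pr| + |((m' : ℚ) - m / q) * Pr| :=
          (abs_sub _ _).trans (add_le_add_left (abs_sub _ _) _)
      _ ≤ _ := by linarith

theorem sifted_nonempty (P : Finset ℕ) (hP : ∀ q ∈ P, q.Prime) (a b : ℤ)
    (ha : ∀ q ∈ P, ¬ (q : ℤ) ∣ a) {m : ℕ}
    (hm : (2 : ℚ) ^ #P - 1 < m * ∏ q ∈ P, (1 - (q : ℚ)⁻¹)) :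
    (sifted P a b m).Nonempty := by
  rw [← card_pos, ← Nat.cast_pos (α := ℚ)]
  linarith [(abs_le.mp (abs_card_sifted_sub_le P hP a b ha m)).1]

lemma four_lt_add_four_mul_prod {s : ℕ} (hs : 2 ≤ s) :
    4 < (s + 4 : ℚ) * ∏ i ∈ Icc 1 s, (1 - ((2 * i + 3 : ℕ) : ℚ)⁻¹) := by
  induction s, hs using Nat.le_induction with
  | base =>
    rw [show Icc 1 2 = {1, 2} from rfl]
    norm_num
  | succ n hn ih =>
    set Pr := ∏ i ∈ Icc 1 n, (1 - ((2 * i + 3 : ℕ) : ℚ)⁻¹)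
    have hPr : 0 ≤ Pr := (prod_one_sub_inv_mem_Icc _ _ fun i _ => by omega).1
    have hstep : ((n + 1 : ℕ) + 4 : ℚ) * (1 - ((2 * (n + 1) + 3 : ℕ) : ℚ)⁻¹) =
        n + 4 + n / (2 * n + 5) := by
      push_cast
      field_simp
      ring
    have : (0 : ℚ) ≤ n / (2 * n + 5) := by positivity
    rw [prod_Icc_succ_top (by omega), mul_left_comm, hstep]
    nlinarith

lemma two_mul_add_three_le {s : ℕ} {p : ℕ → ℕ} (hp : ∀ i, 1 ≤ i → i ≤ s → (p i).Prime)
    (h5 : 5 ≤ p 1) (hmono : ∀ i j, 1 ≤ i → i < j → j ≤ s → p i < p j) :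
    ∀ i, 1 ≤ i → i ≤ s → 2 * i + 3 ≤ p i := by
  intro i hi
  induction i, hi using Nat.le_induction with
  | base => exact fun _ => h5
  | succ k hk ih =>
    intro hks
    have hlt := hmono k (k + 1) hk (by omega) hks
    have hpk := ih (by omega)
    obtain ⟨c, hc⟩ := (hp k hk (by omega)).odd_of_ne_two (by omega)
    obtain ⟨d, hd⟩ := (hp (k + 1) (by omega) hks).odd_of_ne_two (by omega)
    omega

lemma two_pow_sub_one_lt_mul_prod_one_sub_inv {s : ℕ} (hs : 2 ≤ s) {p : ℕ → ℕ}
    (hp : ∀ i, 1 ≤ i → i ≤ s → (p i).Prime) (h5 : 5 ≤ p 1)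
    (hmono : ∀ i j, 1 ≤ i → i < j → j ≤ s → p i < p j) :
    (2 : ℚ) ^ s - 1 < ((s + 4) * 2 ^ (s - 2) : ℕ) * ∏ i ∈ Icc 1 s, (1 - (p i : ℚ)⁻¹) :=
  calc (2 : ℚ) ^ s - 1 < 2 ^ (s - 2) * 2 ^ 2 := by rw [pow_sub_mul_pow 2 hs]; linarith
    _ < 2 ^ (s - 2) * ((s + 4) * ∏ i ∈ Icc 1 s, (1 - ((2 * i + 3 : ℕ) : ℚ)⁻¹)) := by
        gcongr
        exact four_lt_add_four_mul_prod hs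
    _ ≤ 2 ^ (s - 2) * ((s + 4) * ∏ i ∈ Icc 1 s, (1 - (p i : ℚ)⁻¹)) := by
        gcongr _ * (_ * ?_)
        exact prod_one_sub_inv_le_prod_one_sub_inv _ (fun i _ => by omega) fun i hi =>
          two_mul_add_three_le hp h5 hmono i (mem_Icc.1 hi).1 (mem_Icc.1 hi).2
    _ = _ := by push_cast; ring

/-- avoiding prime divisors in an arithmetic progression. -/
theorem stmt_4 (s : ℕ) (hs : 1 < s) (p : ℕ → ℕ)
    (hp : ∀ i, 1 ≤ i → i ≤ s → (p i).Prime)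
    (h5 : 5 ≤ p 1)
    (hmono : ∀ i j, 1 ≤ i → i < j → j ≤ s → p i < p j)
    (u v : ℤ) (hu : Int.gcd u (∏ i ∈ Finset.Icc 1 s, (p i : ℤ)) = 1) :
    ∃ n : ℤ, 0 ≤ n ∧ n < ((s + 4) * 2 ^ (s - 2) : ℕ) ∧
      Int.gcd (u * n + v) (∏ i ∈ Finset.Icc 1 s, (p i : ℤ)) = 1 := by
  have hprime : ∀ i ∈ Icc 1 s, (p i).Prime := fun i hi =>
    hp i (mem_Icc.1 hi).1 (mem_Icc.1 hi).2
  have hirr : ∀ i ∈ Icc 1 s, Irreducible (p i : ℤ) := fun i hi =>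
    (Nat.prime_iff_prime_int.1 (hprime i hi)).irreducible
  have hinj : Set.InjOn p (Icc 1 s) := StrictMonoOn.injOn fun i hi j hj hij =>
    hmono i j (mem_Icc.1 hi).1 hij (mem_Icc.1 hj).2
  have hpu : ∀ i ∈ Icc 1 s, ¬ (p i : ℤ) ∣ u := fun i hi => (hirr i hi).coprime_iff_not_dvd.1
    (IsCoprime.prod_right_iff.1 (Int.isCoprime_iff_gcd_eq_one.2 hu) i hi).symm
  have hbound : (2 : ℚ) ^ #((Icc 1 s).image p) - 1 <
      ((s + 4) * 2 ^ (s - 2) : ℕ) * ∏ q ∈ (Icc 1 s).image p, (1 - (q : ℚ)⁻¹) := by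
    rw [card_image_of_injOn hinj, Nat.card_Icc, Nat.add_sub_cancel, prod_image hinj]
    exact two_pow_sub_one_lt_mul_prod_one_sub_inv hs hp h5 hmono
  obtain ⟨t, ht⟩ :=
    sifted_nonempty _ (forall_mem_image.2 hprime) u v (forall_mem_image.2 hpu) hbound
  simp only [sifted, mem_filter, mem_range, forall_mem_image] at ht
  refine ⟨t, by positivity, by exact_mod_cast ht.1, Int.isCoprime_iff_gcd_eq_one.1 ?_⟩
  exact IsCoprime.prod_right fun i hi => ((hirr i hi).coprime_iff_not_dvd.2 (ht.2 hi)).symm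
end

section
/- Let r_i denote the i-th smallest prime greater than 3 (so r₁ = 5, r₂ = 7, r₃ = 11, ...). For every integer t ≥ 16, the product r₇·r₈·⋯·r_t is strictly greater than ((t+3)·2^(t-3))³. -/
/-!
The case `t = 16` is a direct computation. Passing from `t` to `t + 1` multiplies the left side
by `8 ((t + 4) / (t + 3)) ^ 3`, which is at most `10` once `t ≥ 10`, and the right side by
`r (t + 1) ≥ t ≥ 10`.
-/

/-- `r i` is the `i`-th smallest prime greater than 3 (so `r 1 = 5`, `r 2 = 7`, ...). -/
noncomputable def r (i : ℕ) : ℕ := Nat.nth (fun q => Nat.Prime q ∧ 3 < q) (i - 1)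

lemma setOf_prime_and_three_lt_infinite : {q | Nat.Prime q ∧ 3 < q}.Infinite :=
  (Nat.infinite_setOfPred_prime.sdiff (Set.finite_le_nat 3)).mono fun _ hq => ⟨hq.1, by simpa using hq.2⟩

lemma le_r_succ (i : ℕ) : i ≤ r (i + 1) :=
  (Nat.nth_strictMono setOf_prime_and_three_lt_infinite).le_apply

lemma r_eq_of_count {i v : ℕ} (hv : Nat.Prime v ∧ 3 < v)
    (h : Nat.count (fun q => Nat.Prime q ∧ 3 < q) v = i - 1) : r i = v := by
  rw [r, ← h, Nat.nth_count hv]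

lemma r_seven : r 7 = 23 := r_eq_of_count (by norm_num) (by decide)
lemma r_eight : r 8 = 29 := r_eq_of_count (by norm_num) (by decide)
lemma r_nine : r 9 = 31 := r_eq_of_count (by norm_num) (by decide)
lemma r_ten : r 10 = 37 := r_eq_of_count (by norm_num) (by decide)
lemma r_eleven : r 11 = 41 := r_eq_of_count (by norm_num) (by decide)
lemma r_twelve : r 12 = 43 := r_eq_of_count (by norm_num) (by decide)
lemma r_thirteen : r 13 = 47 := r_eq_of_count (by norm_num) (by decide)
lemma r_fourteen : r 14 = 53 := r_eq_of_count (by norm_num) (by decide)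
lemma r_fifteen : r 15 = 59 := r_eq_of_count (by norm_num) (by decide)
lemma r_sixteen : r 16 = 61 := r_eq_of_count (by norm_num) (by decide)

lemma prod_r_Icc_seven_sixteen :
    ∏ i ∈ Finset.Icc 7 16, r i = 23 * 29 * 31 * 37 * 41 * 43 * 47 * 53 * 59 * 61 := by
  rw [show Finset.Icc 7 16 = {7, 8, 9, 10, 11, 12, 13, 14, 15, 16} by decide]
  norm_num [Finset.prod_insert, r_seven, r_eight, r_nine, r_ten, r_eleven, r_twelve, r_thirteen,
    r_fourteen, r_fifteen, r_sixteen]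

lemma cube_bound_succ_le {t : ℕ} (ht : 10 ≤ t) :
    ((t + 1 + 3) * 2 ^ (t + 1 - 3)) ^ 3 ≤ ((t + 3) * 2 ^ (t - 3)) ^ 3 * 10 := by
  have hcube : 8 * (t + 4) ^ 3 ≤ 10 * (t + 3) ^ 3 := by
    obtain ⟨k, rfl⟩ := Nat.exists_eq_add_of_le ht
    nlinarith [sq_nonneg k]
  calc ((t + 1 + 3) * 2 ^ (t + 1 - 3)) ^ 3
      = 8 * (t + 4) ^ 3 * (2 ^ (t - 3)) ^ 3 := by
        rw [show t + 1 - 3 = t - 3 + 1 by omega, pow_succ]; ring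
    _ ≤ 10 * (t + 3) ^ 3 * (2 ^ (t - 3)) ^ 3 := Nat.mul_le_mul_right _ hcube
    _ = ((t + 3) * 2 ^ (t - 3)) ^ 3 * 10 := by ring

theorem stmt_5 (t : ℕ) (ht : 16 ≤ t) :
    ((t + 3) * 2 ^ (t - 3)) ^ 3 < ∏ i ∈ Finset.Icc 7 t, r i := by
  induction t, ht using Nat.le_induction with
  | base => rw [prod_r_Icc_seven_sixteen]; norm_num
  | succ t ht ih =>
    have hr : 10 ≤ r (t + 1) := by linarith [le_r_succ t]
    rw [Finset.prod_Icc_succ_top (by omega)]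
    calc ((t + 1 + 3) * 2 ^ (t + 1 - 3)) ^ 3
        ≤ ((t + 3) * 2 ^ (t - 3)) ^ 3 * 10 := cube_bound_succ_le (by omega)
      _ ≤ ((t + 3) * 2 ^ (t - 3)) ^ 3 * r (t + 1) := Nat.mul_le_mul_left _ hr
      _ < (∏ i ∈ Finset.Icc 7 t, r i) * r (t + 1) := Nat.mul_lt_mul_of_pos_right ih (by omega)
end

section
/- Let r_i denote the i-th smallest prime greater than 3. For every integer t ≥ 20, the product r₇·r₈·⋯·r_t is strictly greater than (12·(t+3)·2^(t-3) - 7)³. -/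
lemma r_le_r {i j : ℕ} (h : i ≤ j) : r i ≤ r j :=
  (Nat.nth_le_nth setOf_prime_and_three_lt_infinite).2 (Nat.sub_le_sub_right h 1)

-- The default arguments let `r_eq_of_count i q` evaluate `r i` for small explicit `i`.
lemma r_eq_of_count_s9 (i q : ℕ) (hq : Nat.Prime q ∧ 3 < q := by norm_num)
    (hi : Nat.count (fun q => Nat.Prime q ∧ 3 < q) q + 1 = i := by decide) : r i = q := by
  rw [r, ← hi, Nat.add_sub_cancel]
  exact Nat.nth_count hq

lemma prod_r_Icc_seven_twenty :
    ∏ i ∈ Finset.Icc 7 20, r i =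
      23 * 29 * 31 * 37 * 41 * 43 * 47 * 53 * 59 * 61 * 67 * 71 * 73 * 79 := by
  rw [← Finset.Ico_add_one_right_eq_Icc, Finset.prod_Ico_eq_prod_range]
  simp only [Nat.reduceAdd, Nat.reduceSub, Finset.prod_range_succ, Finset.prod_range_zero,
    one_mul, r_eq_of_count_s9 7 23, r_eq_of_count_s9 8 29, r_eq_of_count_s9 9 31,
    r_eq_of_count_s9 10 37, r_eq_of_count_s9 11 41, r_eq_of_count_s9 12 43, r_eq_of_count_s9 13 47,
    r_eq_of_count_s9 14 53, r_eq_of_count_s9 15 59, r_eq_of_count_s9 16 61, r_eq_of_count_s9 17 67,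
    r_eq_of_count_s9 18 71, r_eq_of_count_s9 19 73, r_eq_of_count_s9 20 79]

lemma bound_succ_le_three_mul {t : ℕ} (ht : 3 ≤ t) :
    12 * ((t + 1 + 3) * 2 ^ (t + 1 - 3)) - 7 ≤ 3 * (12 * ((t + 3) * 2 ^ (t - 3)) - 7) := by
  obtain ⟨k, rfl⟩ : ∃ k, t = k + 3 := ⟨t - 3, by omega⟩
  rw [show k + 3 + 1 - 3 = k + 1 by omega, Nat.add_sub_cancel, pow_succ]
  have hk : 1 ≤ 2 ^ k := Nat.one_le_two_pow
  have h₁ : (k + 3 + 1 + 3) * (2 ^ k * 2) = 2 * (k * 2 ^ k) + 14 * 2 ^ k := by ring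
  have h₂ : (k + 3 + 3) * 2 ^ k = k * 2 ^ k + 6 * 2 ^ k := by ring
  omega

theorem stmt_9 (t : ℕ) (ht : 20 ≤ t) :
    (12 * ((t + 3) * 2 ^ (t - 3)) - 7) ^ 3 < ∏ i ∈ Finset.Icc 7 t, r i := by
  induction t, ht using Nat.le_induction with
  | base => rw [prod_r_Icc_seven_twenty]; norm_num
  | succ t ht ih =>
    have hr : 27 ≤ r (t + 1) := calc
      27 ≤ r 8 := by rw [r_eq_of_count_s9 8 29]; norm_num
      _ ≤ r (t + 1) := r_le_r (by omega)
    calc (12 * ((t + 1 + 3) * 2 ^ (t + 1 - 3)) - 7) ^ 3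
        ≤ (3 * (12 * ((t + 3) * 2 ^ (t - 3)) - 7)) ^ 3 :=
          Nat.pow_le_pow_left (bound_succ_le_three_mul (by omega)) 3
      _ = 27 * (12 * ((t + 3) * 2 ^ (t - 3)) - 7) ^ 3 := by ring
      _ < 27 * ∏ i ∈ Finset.Icc 7 t, r i := by omega
      _ ≤ (∏ i ∈ Finset.Icc 7 t, r i) * r (t + 1) := by rw [mul_comm]; gcongr
      _ = ∏ i ∈ Finset.Icc 7 (t + 1), r i := (Finset.prod_Icc_succ_top (by omega) r).symm
end

section
/- Let p be an odd prime, u a positive integer coprime to p, v an arbitrary integer, and L a diagonal p-stable ternary ℤ-lattice. For any positive integer s, the number of integers n with 1 ≤ n ≤ p^s such that un + v is not represented by L over ℤ_p is at most (p^s + p + 2)/(2p+2) when s is odd, and at most (p^s + 2p + 1)/(2p+2) when s is even. -/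
open scoped BigOperators

/-- The bilinear form of the diagonal ternary lattice `⟨a 0, a 1, a 2⟩` over `ℤ_p`. -/
noncomputable def diagB (p : ℕ) [Fact (Nat.Prime p)] (a : Fin 3 → ℤ) (x y : Fin 3 → ℤ_[p]) : ℤ_[p] :=
  ∑ i, (a i : ℤ_[p]) * x i * y i

/-- `N` is represented by the diagonal ternary lattice `⟨a 0, a 1, a 2⟩` over `ℤ_p`. -/
def diagRep (p : ℕ) [Fact (Nat.Prime p)] (a : Fin 3 → ℤ) (N : ℤ) : Prop :=
  ∃ x : Fin 3 → ℤ_[p], (∑ i, (a i : ℤ_[p]) * (x i) ^ 2) = (N : ℤ_[p])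

/-- `p`-stability of the diagonal ternary lattice `⟨a 0, a 1, a 2⟩` (for odd `p`):
either the hyperbolic plane `⟨1,-1⟩` is represented by `L_p`, or
`L_p ≅ ⟨1,-Δ_p⟩ ⊥ ⟨pε_p⟩` with `Δ_p` a non-square unit and `ε_p` a unit. -/
def IsPStable (p : ℕ) [Fact (Nat.Prime p)] (a : Fin 3 → ℤ) : Prop :=
  (∃ u v : Fin 3 → ℤ_[p],
      diagB p a u u = 1 ∧ diagB p a v v = -1 ∧ diagB p a u v = 0) ∨
  (∃ Δ ε : ℤ_[p]ˣ, ¬ IsSquare (Δ : ℤ_[p]) ∧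
    ∃ u v w : Fin 3 → ℤ_[p],
      diagB p a u u = 1 ∧ diagB p a v v = -(Δ : ℤ_[p]) ∧
      diagB p a w w = (p : ℤ_[p]) * (ε : ℤ_[p]) ∧
      diagB p a u v = 0 ∧ diagB p a u w = 0 ∧ diagB p a v w = 0 ∧
      IsUnit (Matrix.det (Matrix.of ![u, v, w])))

/-!
If `L_p` contains a hyperbolic plane it represents every `p`-adic integer. Otherwise, writing
`N = η p ^ k` with `η` a unit, the plane `⟨1, -Δ⟩` represents `N` when `k` is even (it represents
every unit), and `⟨pε⟩` does when `k` is odd unless `η / ε` is `Δ` times a square; so the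
unrepresented values are the `p Δ ε γ²`. Modulo `p ^ s` these are `p W t` with `t` a square
modulo `p ^ (s - 1)`, and `n ↦ u n + v` is injective modulo `p ^ s` on `[1, p ^ s]`, so at most
`#(squares mod p ^ (s - 1))` values of the progression are missed. A unit square modulo `p ^ k` has
the two roots `±c` and a nonunit square is `p²` times a square modulo `p ^ (k - 2)`, whence
`2 #sq(p ^ k) ≤ φ(p ^ k) + 2 #sq(p ^ (k - 2))`, which sums to the stated bounds.
-/

open Finset Polynomial
open scoped Nat

def sqMod (n : ℕ) : Finset ℕ := (range n).image fun c ↦ c ^ 2 % n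

def unitSqMod (n : ℕ) : Finset ℕ := {c ∈ range n | n.Coprime c}.image fun c ↦ c ^ 2 % n

theorem two_mul_card_unitSqMod_le_totient {n : ℕ} (hn : Odd n) (hn1 : 1 < n) :
    2 * #(unitSqMod n) ≤ φ n := by
  refine Finset.mul_card_image_le_card _ 2 fun b hb ↦ ?_
  obtain ⟨c, hc, rfl⟩ := mem_image.mp hb
  obtain ⟨hcn, hcop⟩ := by simpa only [mem_filter, mem_range] using hc
  have hc0 : c ≠ 0 := by rintro rfl; exact hn1.ne' (Nat.coprime_zero_right n |>.mp hcop)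
  have hne : n - c ≠ c := by rintro h; obtain ⟨k, rfl⟩ := hn; omega
  have hsq : (n - c) ^ 2 % n = c ^ 2 % n := by
    rw [← ZMod.natCast_eq_natCast_iff', Nat.cast_pow, Nat.cast_pow, Nat.cast_sub hcn.le,
      ZMod.natCast_self, zero_sub, neg_sq]
  calc 2 = #{n - c, c} := (card_pair hne).symm
    _ ≤ _ := card_le_card fun x hx ↦ by
      rcases mem_insert.mp hx with rfl | hx
      · simp only [mem_filter, mem_range]
        exact ⟨⟨by omega, (Nat.coprime_self_sub_right hcn.le).mpr hcop⟩, hsq⟩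
      · rw [mem_singleton.mp hx]; exact mem_filter.mpr ⟨hc, rfl⟩

theorem sqMod_prime_pow_subset {p k : ℕ} (hp : p.Prime) (hk : 1 ≤ k) :
    sqMod (p ^ k) ⊆ unitSqMod (p ^ k) ∪ (sqMod (p ^ (k - 2))).image (p ^ 2 * ·) := by
  intro x hx
  obtain ⟨c, hc, rfl⟩ := mem_image.mp hx
  by_cases hcop : (p ^ k).Coprime c
  · exact mem_union_left _ (mem_image_of_mem _ (mem_filter.mpr ⟨hc, hcop⟩))
  obtain ⟨d, rfl⟩ : p ∣ c := by
    by_contra hpc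
    exact hcop (((Nat.Prime.coprime_iff_not_dvd hp).mpr hpc).pow_left k)
  refine mem_union_right _ (mem_image.mpr ⟨d ^ 2 % p ^ (k - 2), mem_image.mpr ⟨d % p ^ (k - 2),
    mem_range.mpr (Nat.mod_lt _ (pow_pos hp.pos _)), (Nat.pow_mod _ _ _).symm⟩, ?_⟩)
  obtain rfl | ⟨j, rfl⟩ : k = 1 ∨ ∃ j, k = j + 2 := by
    rcases k with _ | _ | j <;> simp_all
  · obtain rfl : d = 0 := by
      have : p * d < p * 1 := by simpa using mem_range.mp hc
      have := Nat.lt_of_mul_lt_mul_left this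
      omega
    simp
  · rw [Nat.add_sub_cancel, mul_pow, pow_add, mul_comm (p ^ j), Nat.mul_mod_mul_left]

theorem two_mul_card_sqMod_prime_pow_le {p k : ℕ} (hp : p.Prime) (hp2 : p ≠ 2) (hk : 1 ≤ k) :
    2 * #(sqMod (p ^ k)) ≤ p ^ (k - 1) * (p - 1) + 2 * #(sqMod (p ^ (k - 2))) := by
  have hodd : Odd (p ^ k) := (hp.eq_two_or_odd'.resolve_left hp2).pow
  have hunit := two_mul_card_unitSqMod_le_totient hodd (Nat.one_lt_pow (by omega) hp.one_lt)
  rw [Nat.totient_prime_pow hp hk] at hunit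
  have himage := Finset.card_image_le (s := sqMod (p ^ (k - 2))) (f := (p ^ 2 * ·))
  have hunion := card_le_card (sqMod_prime_pow_subset hp hk) |>.trans (card_union_le _ _)
  omega

theorem card_sqMod_prime_pow_le {p : ℕ} (hp : p.Prime) (hp2 : p ≠ 2) (m : ℕ) :
    (#(sqMod (p ^ m)) : ℚ) ≤
      if Odd (m + 1) then ((p : ℚ) ^ (m + 1) + p + 2) / (2 * p + 2)
      else ((p : ℚ) ^ (m + 1) + 2 * p + 1) / (2 * p + 2) := by
  have step (k : ℕ) (hk : 1 ≤ k) :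
      2 * (#(sqMod (p ^ k)) : ℚ) ≤ p ^ (k - 1) * (p - 1) + 2 * #(sqMod (p ^ (k - 2))) := by
    have := two_mul_card_sqMod_prime_pow_le hp hp2 hk
    rw [← Nat.cast_le (α := ℚ)] at this
    push_cast [hp.one_le] at this
    exact this
  have base : #(sqMod (p ^ 0)) = 1 := rfl
  induction m using Nat.twoStepInduction with
  | zero =>
    rw [base, Nat.cast_one, zero_add, if_pos odd_one, pow_one, le_div_iff₀ (by positivity)]
    linarith
  | one =>
    have h1 := step 1 le_rfl
    rw [pow_zero, base, Nat.cast_one] at h1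
    rw [if_neg (by decide), le_div_iff₀ (by positivity)]
    linear_combination (p + 1 : ℚ) * h1
  | more m ih _ =>
    have h2 := step (m + 2) (by omega)
    rw [Nat.add_sub_cancel, show m + 2 - 1 = m + 1 from rfl] at h2
    have key (c : ℚ) (h : (#(sqMod (p ^ m)) : ℚ) ≤ (p ^ (m + 1) + c) / (2 * p + 2)) :
        (#(sqMod (p ^ (m + 2))) : ℚ) ≤ (p ^ (m + 2 + 1) + c) / (2 * p + 2) := by
      rw [le_div_iff₀ (by positivity)] at h ⊢
      have := mul_le_mul_of_nonneg_right h2 (by positivity : (0 : ℚ) ≤ 2 * p + 2)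
      linear_combination this / 2 + h
    rw [if_congr (show Odd (m + 2 + 1) ↔ Odd (m + 1) by simp [Nat.odd_add]) rfl rfl]
    split_ifs at ih ⊢ <;>
      simpa only [add_assoc] using key _ (by simpa only [add_assoc] using ih)

theorem Int.ncard_le_card_of_forall_modEq {ι : Type*} {M u v : ℤ} (hu : IsCoprime u M)
    {S : Set ℤ} (hS : S ⊆ Set.Icc 1 M) (T : Finset ι) (g : ι → ℤ)
    (h : ∀ n ∈ S, ∃ t ∈ T, u * n + v ≡ g t [ZMOD M]) : S.ncard ≤ #T := by
  calc S.ncard ≤ (↑(T.image fun t ↦ g t % M) : Set ℤ).ncard := by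
        refine Set.ncard_le_ncard_of_injOn (fun n ↦ (u * n + v) % M) (fun n hn ↦ ?_) ?_
        · obtain ⟨t, ht, hmod⟩ := h n hn
          exact mem_coe.mpr (mem_image.mpr ⟨t, ht, hmod.symm⟩)
        · intro n hn n' hn' hnn'
          have hdvd : M ∣ u * (n' - n) := by
            simpa only [add_sub_add_right_eq_sub, mul_sub] using Int.ModEq.dvd hnn'
          obtain ⟨hn1, hnM⟩ := hS hn
          obtain ⟨hn1', hnM'⟩ := hS hn'
          have := Int.eq_zero_of_abs_lt_dvd (hu.symm.dvd_of_dvd_mul_left hdvd)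
            (abs_sub_lt_iff.mpr ⟨by linarith, by linarith⟩)
          linarith
    _ = #(T.image fun t ↦ g t % M) := Set.ncard_coe_finset _
    _ ≤ #T := card_image_le


theorem FiniteField.exists_sq_sub_mul_sq_eq {F : Type*} [Field F] [Fintype F]
    (hF : Fintype.card F % 2 = 1) {d : F} (hd : d ≠ 0) (e : F) :
    ∃ x y : F, x ^ 2 - d * y ^ 2 = e := by
  obtain ⟨x, y, hxy⟩ := FiniteField.exists_root_sum_quadratic
    (degree_X_pow_sub_C two_pos e) (degree_C_mul_X_pow 2 (neg_ne_zero.mpr hd)) hF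
  refine ⟨x, y, ?_⟩
  simp only [eval_sub, eval_pow, eval_X, eval_C, eval_mul] at hxy
  linear_combination hxy

namespace PadicInt

variable {p : ℕ} [Fact p.Prime]

theorem toZMod_eq_zero_iff_norm_lt_one {z : ℤ_[p]} : toZMod z = 0 ↔ ‖z‖ < 1 := by
  rw [← RingHom.mem_ker, ker_toZMod, IsLocalRing.mem_maximalIdeal, mem_nonunits]

theorem isUnit_two (hp2 : p ≠ 2) : IsUnit (2 : ℤ_[p]) := by
  rw [isUnit_iff, ← Nat.cast_ofNat, norm_natCast_eq_one_iff]
  exact (Nat.coprime_primes Fact.out Nat.prime_two).mpr hp2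

theorem isSquare_of_toZMod_eq_sq (hp2 : p ≠ 2) {c : ℤ_[p]} {t : ZMod p} (ht : t ≠ 0)
    (hc : toZMod c = t ^ 2) : IsSquare c := by
  set a : ℤ_[p] := (t.val : ℤ_[p])
  have hta : toZMod a = t := by simp [a]
  have ha : ‖a‖ = 1 :=
    le_antisymm (norm_le_one a) (not_lt.mp (toZMod_eq_zero_iff_norm_lt_one.not.mp (hta ▸ ht)))
  have hnorm : ‖(X ^ 2 - C c).aeval a‖ < ‖(X ^ 2 - C c : ℤ_[p][X]).derivative.aeval a‖ ^ 2 := by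
    have h2 : ‖(2 : ℤ_[p])‖ = 1 := isUnit_iff.mp (isUnit_two hp2)
    simp only [map_sub, map_pow, aeval_X, aeval_C, derivative_X_pow, derivative_C, sub_zero,
      map_mul, map_natCast, Algebra.algebraMap_self, RingHom.id_apply]
    rw [Nat.cast_ofNat, norm_mul, h2, pow_one, ha, one_mul, one_pow,
      ← toZMod_eq_zero_iff_norm_lt_one, map_sub, map_pow, hta, hc, sub_self]
  obtain ⟨z, hz, -⟩ := hensels_lemma hnorm
  exact ⟨z, by simpa [sub_eq_zero, sq, eq_comm] using hz⟩

theorem toZMod_ne_zero_of_isUnit {z : ℤ_[p]} (hz : IsUnit z) : toZMod z ≠ 0 :=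
  (hz.map toZMod).ne_zero

theorem isSquare_of_isSquare_toZMod (hp2 : p ≠ 2) {c : ℤ_[p]} (hc : IsUnit c)
    (h : IsSquare (toZMod c)) : IsSquare c := by
  obtain ⟨t, ht⟩ := h
  refine isSquare_of_toZMod_eq_sq hp2 (t := t) ?_ (by rw [ht, sq])
  rintro rfl
  exact toZMod_ne_zero_of_isUnit hc (by rw [ht, mul_zero])

/-- The unit square classes of `ℤ_[p]` are those of `ZMod p`, where the product of two
nonsquares is a square. -/
theorem exists_eq_mul_sq_of_not_isSquare (hp2 : p ≠ 2) {Δ μ : ℤ_[p]ˣ}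
    (hΔ : ¬IsSquare (Δ : ℤ_[p])) (hμ : ¬IsSquare (μ : ℤ_[p])) :
    ∃ b : ℤ_[p], (μ : ℤ_[p]) = Δ * b ^ 2 := by
  have hχ (x : ℤ_[p]ˣ) (hx : ¬IsSquare (x : ℤ_[p])) :
      quadraticChar (ZMod p) (toZMod (x : ℤ_[p])) = -1 :=
    quadraticChar_neg_one_iff_not_isSquare.mpr fun h ↦
      hx (isSquare_of_isSquare_toZMod hp2 x.isUnit h)
  obtain ⟨c, hc⟩ : IsSquare ((μ : ℤ_[p]) * Δ) := by
    refine isSquare_of_isSquare_toZMod hp2 (μ.isUnit.mul Δ.isUnit) ?_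
    rw [map_mul, ← quadraticChar_one_iff_isSquare (mul_ne_zero
      (toZMod_ne_zero_of_isUnit μ.isUnit) (toZMod_ne_zero_of_isUnit Δ.isUnit)), map_mul,
      hχ μ hμ, hχ Δ hΔ, neg_one_mul, neg_neg]
  refine ⟨c * ↑Δ⁻¹, ?_⟩
  linear_combination (↑Δ * (↑Δ⁻¹ : ℤ_[p]) ^ 2) * hc
    - (μ : ℤ_[p]) * (1 + ↑Δ * ↑Δ⁻¹) * Δ.mul_inv

theorem exists_sq_sub_mul_sq_eq (hp2 : p ≠ 2) (d : ℤ_[p]ˣ) {η : ℤ_[p]} (hη : IsUnit η) :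
    ∃ x y : ℤ_[p], x ^ 2 - d * y ^ 2 = η := by
  have hcard : Fintype.card (ZMod p) % 2 = 1 := by
    rw [ZMod.card]; exact Nat.odd_iff.mp ((Fact.out : p.Prime).eq_two_or_odd'.resolve_left hp2)
  obtain ⟨x, y, hxy⟩ := FiniteField.exists_sq_sub_mul_sq_eq hcard
    (toZMod_ne_zero_of_isUnit d.isUnit) (toZMod η)
  have hdd : toZMod (d : ℤ_[p]) * toZMod (↑d⁻¹ : ℤ_[p]) = 1 := by
    rw [← map_mul, d.mul_inv, map_one]
  by_cases hx : x = 0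
  · have hy : y ≠ 0 := by
      rintro rfl
      exact toZMod_ne_zero_of_isUnit hη (by rw [← hxy, hx]; ring)
    obtain ⟨b, hb⟩ := isSquare_of_toZMod_eq_sq hp2 hy (c := -η * ↑d⁻¹) (by
      rw [map_mul, map_neg, ← hxy, hx]; linear_combination y ^ 2 * hdd)
    exact ⟨0, b, by linear_combination (d : ℤ_[p]) * hb + η * d.mul_inv⟩
  · obtain ⟨b, hb⟩ := isSquare_of_toZMod_eq_sq hp2 hx (c := η + d * (y.val : ℤ_[p]) ^ 2) (by
      simp only [map_add, map_mul, map_pow, map_natCast, ZMod.natCast_zmod_val]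
      linear_combination -hxy)
    exact ⟨b, y.val, by rw [sq b, ← hb]; ring⟩

theorem exists_mem_sqMod_modEq_of_eq_mul_sq {N : ℤ} {x γ : ℤ_[p]}
    (h : (N : ℤ_[p]) = p * x * γ ^ 2) (m : ℕ) :
    ∃ t ∈ sqMod (p ^ m), N ≡ p * x.appr m * t [ZMOD p ^ (m + 1)] := by
  set c := γ.appr m
  obtain ⟨z, hz⟩ := Ideal.mem_span_singleton.mp (appr_spec m x)
  obtain ⟨w, hw⟩ := Ideal.mem_span_singleton.mp (appr_spec m γ)
  refine ⟨c ^ 2 % p ^ m, mem_image_of_mem _ (mem_range.mpr (appr_lt γ m)), ?_⟩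
  have hsq : N ≡ p * x.appr m * c ^ 2 [ZMOD p ^ (m + 1)] := by
    refine (Int.modEq_iff_dvd.mpr ?_).symm
    rw [← pow_p_dvd_int_iff]
    push_cast
    exact ⟨z * γ ^ 2 + x.appr m * w * (γ + c), by
      rw [h]; linear_combination (p : ℤ_[p]) * γ ^ 2 * hz + p * x.appr m * (γ + c) * hw⟩
  have hred : ((c : ℤ) ^ 2) ≡ ((c ^ 2 % p ^ m : ℕ) : ℤ) [ZMOD p ^ m] := by
    push_cast; exact (Int.mod_modEq _ _).symm
  refine hsq.trans ?_
  rw [mul_assoc, mul_assoc, pow_succ']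
  exact (hred.mul_left _).mul_left'

end PadicInt

section DiagonalTernary

variable {p : ℕ} [Fact p.Prime] {a : Fin 3 → ℤ}

theorem diagRep_of_mul_sq (e : Fin 3 → ℤ_[p]) (x : ℤ_[p]) {N : ℤ}
    (h : x ^ 2 * diagB p a e e = N) : diagRep p a N :=
  ⟨fun i ↦ x * e i, by
    simp only [diagB, Fin.sum_univ_three] at h ⊢
    linear_combination h⟩

theorem diagRep_of_orthogonal {e f : Fin 3 → ℤ_[p]} (hef : diagB p a e f = 0) (x y : ℤ_[p])
    {N : ℤ} (h : x ^ 2 * diagB p a e e + y ^ 2 * diagB p a f f = N) : diagRep p a N :=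
  ⟨fun i ↦ x * e i + y * f i, by
    simp only [diagB, Fin.sum_univ_three] at hef h ⊢
    linear_combination h + 2 * x * y * hef⟩

/-- `N = ((N + 1) / 2) ^ 2 - ((N - 1) / 2) ^ 2`. -/
theorem diagRep_of_hyperbolic (hp2 : p ≠ 2) {e f : Fin 3 → ℤ_[p]} (he : diagB p a e e = 1)
    (hf : diagB p a f f = -1) (hef : diagB p a e f = 0) (N : ℤ) : diagRep p a N := by
  obtain ⟨h, hh⟩ := (PadicInt.isUnit_two hp2).exists_right_inv
  refine diagRep_of_orthogonal hef ((N + 1) * h) ((N - 1) * h) ?_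
  rw [he, hf]
  linear_combination (N * (2 * h + 1) : ℤ_[p]) * hh

theorem exists_eq_mul_sq_of_not_diagRep (hp2 : p ≠ 2) {Δ ε : ℤ_[p]ˣ}
    (hΔ : ¬IsSquare (Δ : ℤ_[p])) {e f g : Fin 3 → ℤ_[p]} (he : diagB p a e e = 1)
    (hf : diagB p a f f = -Δ) (hg : diagB p a g g = p * ε) (hef : diagB p a e f = 0) {N : ℤ}
    (hN : ¬diagRep p a N) : ∃ γ : ℤ_[p], (N : ℤ_[p]) = p * (Δ * ε) * γ ^ 2 := by
  have hN0 : (N : ℤ_[p]) ≠ 0 := fun h0 ↦ hN (diagRep_of_mul_sq e 0 (by simp [h0]))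
  set η := PadicInt.unitCoeff hN0
  have hNη := PadicInt.unitCoeff_spec hN0
  rcases Nat.even_or_odd' (N : ℤ_[p]).valuation with ⟨k, hk | hk⟩ <;> rw [hk] at hNη
  · obtain ⟨x, y, hxy⟩ := PadicInt.exists_sq_sub_mul_sq_eq hp2 Δ η.isUnit
    refine absurd (diagRep_of_orthogonal hef (p ^ k * x) (p ^ k * y) ?_) hN
    rw [he, hf, hNη]
    linear_combination ((p : ℤ_[p]) ^ k) ^ 2 * hxy
  have hεμ : (ε : ℤ_[p]) * ↑(ε⁻¹ * η) = η := by simp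
  by_cases hμ : IsSquare (↑(ε⁻¹ * η) : ℤ_[p])
  · obtain ⟨b, hb⟩ := hμ
    refine absurd (diagRep_of_mul_sq g ((p : ℤ_[p]) ^ k * b) ?_) hN
    rw [hg, hNη, ← hεμ, hb]
    ring
  · obtain ⟨b, hb⟩ := PadicInt.exists_eq_mul_sq_of_not_isSquare hp2 hΔ hμ
    refine ⟨p ^ k * b, ?_⟩
    rw [hNη, ← hεμ, hb]
    ring

end DiagonalTernary

theorem stmt_12_general (p : ℕ) [Fact (Nat.Prime p)] (hodd : Odd p)
    (u : ℤ) (hup : IsCoprime u (p : ℤ)) (v : ℤ)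
    (a : Fin 3 → ℤ) (hstable : IsPStable p a)
    (s : ℕ) (hs : 0 < s) :
    ({n : ℤ | 1 ≤ n ∧ n ≤ (p : ℤ) ^ s ∧ ¬ diagRep p a (u * n + v)}.ncard : ℚ) ≤
      if Odd s then ((p : ℚ) ^ s + p + 2) / (2 * p + 2)
      else ((p : ℚ) ^ s + 2 * p + 1) / (2 * p + 2) := by
  have hp2 : p ≠ 2 := by rintro rfl; exact Nat.not_odd_iff_even.mpr even_two hodd
  obtain ⟨m, rfl⟩ : ∃ m, s = m + 1 := ⟨s - 1, by omega⟩
  rcases hstable with ⟨e, f, he, hf, hef⟩ | ⟨Δ, ε, hΔ, e, f, g, he, hf, hg, hef, -, -, -⟩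
  · simp only [diagRep_of_hyperbolic hp2 he hf hef, not_true_eq_false, and_false,
      Set.ofPred_false, Set.ncard_empty, Nat.cast_zero]
    split_ifs <;> positivity
  · refine le_trans ?_ (card_sqMod_prime_pow_le Fact.out hp2 m)
    refine Nat.cast_le.mpr (Int.ncard_le_card_of_forall_modEq (v := v) hup.pow_right
      (fun n hn ↦ ⟨hn.1, hn.2.1⟩) _ (fun t ↦ p * (↑Δ * ↑ε : ℤ_[p]).appr m * t) fun n hn ↦ ?_)
    obtain ⟨γ, hγ⟩ := exists_eq_mul_sq_of_not_diagRep hp2 hΔ he hf hg hef hn.2.2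
    exact PadicInt.exists_mem_sqMod_modEq_of_eq_mul_sq hγ m

/-- bound on the number of non-represented values in an arithmetic
progression for a diagonal `p`-stable ternary lattice. -/
theorem stmt_12 (p : ℕ) [Fact (Nat.Prime p)] (hodd : Odd p)
    (u : ℤ) (hu : 0 < u) (hup : IsCoprime u (p : ℤ)) (v : ℤ)
    (a : Fin 3 → ℤ) (ha : ∀ i, 0 < a i) (hstable : IsPStable p a)
    (s : ℕ) (hs : 0 < s) :
    ({n : ℤ | 1 ≤ n ∧ n ≤ (p : ℤ) ^ s ∧ ¬ diagRep p a (u * n + v)}.ncard : ℚ) ≤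
      if Odd s then ((p : ℚ) ^ s + p + 2) / (2 * p + 2)
      else ((p : ℚ) ^ s + 2 * p + 1) / (2 * p + 2) :=
  stmt_12_general p hodd u hup v a hstable s hs
end

section
/- Let K be a 2-stable diagonal ternary ℤ-lattice, u an odd integer, and l any integer. Then there exists ν ∈ {0,1,2} such that u(4n+ν)+l is represented by K over ℤ₂ for every integer n. -/
open scoped BigOperators

/-- 2-stability of the diagonal ternary lattice `⟨a 0, a 1, a 2⟩`:
`K₂` is unimodular, or `⟨1,3⟩ → K₂`, or `⟨1,7⟩ → K₂`. -/
def Is2Stable (a : Fin 3 → ℤ) : Prop :=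
  (IsUnit ((a 0 * a 1 * a 2 : ℤ) : ℤ_[2])) ∨
  (∃ u v : Fin 3 → ℤ_[2],
      diagB 2 a u u = 1 ∧ diagB 2 a v v = 3 ∧ diagB 2 a u v = 0) ∨
  (∃ u v : Fin 3 → ℤ_[2],
      diagB 2 a u u = 1 ∧ diagB 2 a v v = 7 ∧ diagB 2 a u v = 0)

/-!
By the local square theorem, a 2-adic unit `≡ 1 (mod 8)` is a square, so an integer congruent
mod 8 to a value of a diagonal form at a vector with an odd coordinate over an odd coefficient is
represented 2-adically. In the unimodular case this shows that `K₂` represents the classes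
`a₀` and `a₀ + a₁` mod 4; if `⟨1, c⟩ → K₂` with `c ≡ 3 (mod 4)`, it represents every odd
integer. Either way two distinct classes mod 4 are represented, and since `u` is odd the three
numbers `uν + l`, `ν = 0, 1, 2`, miss only one class mod 4.
-/

namespace PadicInt

theorem isUnit_intCast_iff {p : ℕ} [Fact p.Prime] {n : ℤ} :
    IsUnit (n : ℤ_[p]) ↔ ¬ (p : ℤ) ∣ n := by
  rw [← not_iff_not, not_not, not_isUnit_iff, norm_int_lt_one_iff_dvd]

theorem isUnit_intCast_iff_odd {n : ℤ} : IsUnit (n : ℤ_[2]) ↔ Odd n := by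
  rw [isUnit_intCast_iff, ← Int.not_even_iff_odd, even_iff_two_dvd, Nat.cast_ofNat]

theorem isSquare_of_eight_dvd_sub_one {t : ℤ_[2]} (ht : (8 : ℤ_[2]) ∣ t - 1) : IsSquare t := by
  obtain ⟨k, hk⟩ := ht
  let F : Polynomial ℤ_[2] := Polynomial.X ^ 2 - Polynomial.C t
  have hF : F.aeval (1 : ℤ_[2]) = (2 : ℤ_[2]) ^ 3 * -k := by
    simp only [F, map_sub, map_pow, Polynomial.aeval_X, Polynomial.aeval_C,
      Algebra.algebraMap_self, RingHom.id_apply]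
    linear_combination -hk
  have hF' : F.derivative.aeval (1 : ℤ_[2]) = 2 := by
    simp [F]
    norm_num
  have hnorm : ‖F.aeval (1 : ℤ_[2])‖ < ‖F.derivative.aeval (1 : ℤ_[2])‖ ^ 2 := by
    have h2 : ‖(2 : ℤ_[2])‖ = 2⁻¹ := by exact_mod_cast norm_p (p := 2)
    rw [hF, hF', norm_mul, norm_pow, h2]
    nlinarith [norm_le_one (-k : ℤ_[2]), norm_nonneg (-k : ℤ_[2])]
  obtain ⟨z, hz, -⟩ := hensels_lemma hnorm
  refine ⟨z, ?_⟩
  simp only [F, map_sub, map_pow, Polynomial.aeval_X, Polynomial.aeval_C,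
    Algebra.algebraMap_self, RingHom.id_apply] at hz
  linear_combination -hz

theorem exists_mul_sq_add_eq {c x s N : ℤ_[2]} (hc : IsUnit c) (hx : IsUnit x)
    (h : (8 : ℤ_[2]) ∣ N - (c * x ^ 2 + s)) : ∃ y : ℤ_[2], c * y ^ 2 + s = N := by
  obtain ⟨U, hU⟩ := hc.mul (hx.pow 2)
  have ht : (8 : ℤ_[2]) ∣ ↑U⁻¹ * (N - s) - 1 := by
    have : ↑U⁻¹ * (N - s) - 1 = ↑U⁻¹ * (N - (c * x ^ 2 + s)) := by
      rw [← hU, mul_sub, mul_sub, mul_add, Units.inv_mul]; ring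
    exact this ▸ h.mul_left _
  obtain ⟨r, hr⟩ := isSquare_of_eight_dvd_sub_one ht
  refine ⟨x * r, ?_⟩
  calc c * (x * r) ^ 2 + s = U * (r * r) + s := by rw [hU]; ring
    _ = N := by rw [← hr, Units.mul_inv_cancel_left]; ring

end PadicInt

theorem exists_sum_mul_sq_eq_of_modEq {ι : Type*} [Fintype ι] [DecidableEq ι] (a x : ι → ℤ)
    {j : ι} (haj : Odd (a j)) (hxj : Odd (x j)) {N : ℤ}
    (hN : N ≡ ∑ i, a i * x i ^ 2 [ZMOD 8]) :
    ∃ z : ι → ℤ_[2], ∑ i, (a i : ℤ_[2]) * z i ^ 2 = N := by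
  set s : ℤ_[2] := ∑ i ∈ Finset.univ.erase j, (a i : ℤ_[2]) * (x i : ℤ_[2]) ^ 2
  have h8 : (8 : ℤ_[2]) ∣ N - ((a j : ℤ_[2]) * (x j : ℤ_[2]) ^ 2 + s) := by
    rw [Finset.add_sum_erase _ (fun i => (a i : ℤ_[2]) * (x i : ℤ_[2]) ^ 2)
      (Finset.mem_univ j)]
    exact_mod_cast Int.cast_dvd_cast (8 : ℤ) _ (Int.ModEq.dvd hN.symm)
  obtain ⟨y, hy⟩ := PadicInt.exists_mul_sq_add_eq (PadicInt.isUnit_intCast_iff_odd.2 haj)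
    (PadicInt.isUnit_intCast_iff_odd.2 hxj) h8
  refine ⟨Function.update (fun i => (x i : ℤ_[2])) j y, ?_⟩
  rw [← Finset.add_sum_erase _ _ (Finset.mem_univ j), ← hy, Function.update_self]
  congr 1
  refine Finset.sum_congr rfl fun i hi => ?_
  rw [Function.update_of_ne (Finset.ne_of_mem_erase hi)]

section Representation

variable {a : Fin 3 → ℤ}

theorem diagRep_of_modEq_eight (x : Fin 3 → ℤ) {j : Fin 3} (haj : Odd (a j)) (hxj : Odd (x j))
    {N : ℤ} (hN : N ≡ ∑ i, a i * x i ^ 2 [ZMOD 8]) : diagRep 2 a N :=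
  exists_sum_mul_sq_eq_of_modEq a x haj hxj hN

theorem diagRep_of_modEq_four_first (h0 : Odd (a 0)) (h1 : Odd (a 1)) {N : ℤ}
    (hN : N ≡ a 0 [ZMOD 4]) : diagRep 2 a N := by
  have hcase : N ≡ a 0 [ZMOD 8] ∨ N ≡ a 0 + a 1 * 2 ^ 2 [ZMOD 8] := by
    obtain ⟨k, hk⟩ := h1
    unfold Int.ModEq at *
    omega
  rcases hcase with hN8 | hN8
  · exact diagRep_of_modEq_eight ![1, 0, 0] (j := 0) h0 odd_one (by simpa [Fin.sum_univ_three])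
  · exact diagRep_of_modEq_eight ![1, 2, 0] (j := 0) h0 odd_one (by simpa [Fin.sum_univ_three])

theorem diagRep_of_modEq_four_first_add_second (hodd : ∀ i, Odd (a i)) {N : ℤ}
    (hN : N ≡ a 0 + a 1 [ZMOD 4]) : diagRep 2 a N := by
  have hcase : N ≡ a 0 + a 1 [ZMOD 8] ∨ N ≡ a 0 + a 1 + a 2 * 2 ^ 2 [ZMOD 8] := by
    obtain ⟨k, hk⟩ := hodd 2
    unfold Int.ModEq at *
    omega
  rcases hcase with hN8 | hN8
  · exact diagRep_of_modEq_eight ![1, 1, 0] (j := 0) (hodd 0) odd_one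
      (by simpa [Fin.sum_univ_three])
  · exact diagRep_of_modEq_eight ![1, 1, 2] (j := 0) (hodd 0) odd_one
      (by simpa [Fin.sum_univ_three])

theorem exists_sq_add_mul_sq_eq {c : ℤ} (hc : c ≡ 3 [ZMOD 4]) {N : ℤ} (hN : Odd N) :
    ∃ α β : ℤ_[2], α ^ 2 + c * β ^ 2 = N := by
  have hc' : Odd c := by obtain ⟨k, hk⟩ := Int.ModEq.dvd hc.symm; exact ⟨2 * k + 1, by omega⟩
  have hcase : N ≡ 1 [ZMOD 8] ∨ N ≡ 1 + c * 2 ^ 2 [ZMOD 8] ∨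
      N ≡ c [ZMOD 8] ∨ N ≡ 2 ^ 2 + c [ZMOD 8] := by
    obtain ⟨k, hk⟩ := hN
    unfold Int.ModEq at *
    omega
  suffices ∃ z : Fin 2 → ℤ_[2], ∑ i, ((![1, c] i : ℤ) : ℤ_[2]) * z i ^ 2 = N by
    obtain ⟨z, hz⟩ := this
    exact ⟨z 0, z 1, by simpa [Fin.sum_univ_two] using hz⟩
  rcases hcase with hN8 | hN8 | hN8 | hN8
  · exact exists_sum_mul_sq_eq_of_modEq _ ![1, 0] (j := 0) odd_one odd_one
      (by simpa [Fin.sum_univ_two])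
  · exact exists_sum_mul_sq_eq_of_modEq _ ![1, 2] (j := 0) odd_one odd_one
      (by simpa [Fin.sum_univ_two])
  · exact exists_sum_mul_sq_eq_of_modEq _ ![0, 1] (j := 1) hc' odd_one
      (by simpa [Fin.sum_univ_two])
  · exact exists_sum_mul_sq_eq_of_modEq _ ![2, 1] (j := 1) hc' odd_one
      (by simpa [Fin.sum_univ_two])

theorem sum_mul_add_sq_eq_diagB {p : ℕ} [Fact p.Prime] (w v : Fin 3 → ℤ_[p]) (α β : ℤ_[p]) :
    ∑ i, (a i : ℤ_[p]) * (α * w i + β * v i) ^ 2 =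
      α ^ 2 * diagB p a w w + 2 * α * β * diagB p a w v + β ^ 2 * diagB p a v v := by
  simp only [diagB, Finset.mul_sum, ← Finset.sum_add_distrib]
  exact Finset.sum_congr rfl fun i _ => by ring

theorem diagRep_of_orthogonal_pair {p : ℕ} [Fact p.Prime] {w v : Fin 3 → ℤ_[p]} {c : ℤ_[p]}
    (hww : diagB p a w w = 1) (hvv : diagB p a v v = c) (hwv : diagB p a w v = 0) {N : ℤ}
    {α β : ℤ_[p]} (hN : α ^ 2 + c * β ^ 2 = N) : diagRep p a N :=
  ⟨fun i => α * w i + β * v i, by rw [sum_mul_add_sq_eq_diagB, hww, hvv, hwv, ← hN]; ring⟩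

theorem diagRep_of_odd_of_orthogonal_pair {w v : Fin 3 → ℤ_[2]} {c : ℤ} (hc : c ≡ 3 [ZMOD 4])
    (hww : diagB 2 a w w = 1) (hvv : diagB 2 a v v = c) (hwv : diagB 2 a w v = 0) {N : ℤ}
    (hN : Odd N) : diagRep 2 a N :=
  have ⟨_, _, hαβ⟩ := exists_sq_add_mul_sq_eq hc hN
  diagRep_of_orthogonal_pair hww hvv hwv hαβ

end Representation

theorem Is2Stable.exists_two_classes_mod_four {a : Fin 3 → ℤ} (hst : Is2Stable a) :
    ∃ r s : ℤ, ¬ r ≡ s [ZMOD 4] ∧ (∀ N, N ≡ r [ZMOD 4] → diagRep 2 a N) ∧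
      (∀ N, N ≡ s [ZMOD 4] → diagRep 2 a N) := by
  have odd_of_modEq {N r : ℤ} (hr : r % 2 = 1) (hN : N ≡ r [ZMOD 4]) : Odd N := by
    unfold Int.ModEq at hN; exact Int.odd_iff.2 (by omega)
  rcases hst with hunit | ⟨w, v, hww, hvv, hwv⟩ | ⟨w, v, hww, hvv, hwv⟩
  · have hodd : ∀ i, Odd (a i) := by
      rw [PadicInt.isUnit_intCast_iff_odd, Int.odd_mul, Int.odd_mul] at hunit
      exact fun i => by fin_cases i <;> simp [hunit]
    refine ⟨a 0, a 0 + a 1, ?_, fun N => diagRep_of_modEq_four_first (hodd 0) (hodd 1),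
      fun N => diagRep_of_modEq_four_first_add_second hodd⟩
    obtain ⟨k, hk⟩ := hodd 1
    unfold Int.ModEq; omega
  · refine ⟨1, 3, by decide, fun N hN => ?_, fun N hN => ?_⟩ <;>
      exact diagRep_of_odd_of_orthogonal_pair (c := 3) rfl hww (by exact_mod_cast hvv) hwv
        (odd_of_modEq (by norm_num) hN)
  · refine ⟨1, 3, by decide, fun N hN => ?_, fun N hN => ?_⟩ <;>
      exact diagRep_of_odd_of_orthogonal_pair (c := 7) rfl hww (by exact_mod_cast hvv) hwv
        (odd_of_modEq (by norm_num) hN)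

theorem exists_forall_of_two_classes_mod_four {S : ℤ → Prop} {r s : ℤ} (hrs : ¬ r ≡ s [ZMOD 4])
    (hr : ∀ N, N ≡ r [ZMOD 4] → S N) (hs : ∀ N, N ≡ s [ZMOD 4] → S N) {u : ℤ} (hu : Odd u)
    (l : ℤ) : ∃ ν : ℕ, ν ≤ 2 ∧ ∀ n : ℤ, S (u * (4 * n + ν) + l) := by
  obtain ⟨ν, hν2, hν⟩ :
      ∃ ν : ℕ, ν ≤ 2 ∧ (u * ν + l ≡ r [ZMOD 4] ∨ u * ν + l ≡ s [ZMOD 4]) := by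
    obtain ⟨k, hk⟩ := hu
    unfold Int.ModEq at *
    by_contra! h
    have h0 := h 0 (by norm_num)
    have h1 := h 1 (by norm_num)
    have h2 := h 2 (by norm_num)
    push_cast at h0 h1 h2
    omega
  refine ⟨ν, hν2, fun n => ?_⟩
  have hshift : u * (4 * n + ν) + l ≡ u * ν + l [ZMOD 4] :=
    Int.modEq_iff_dvd.2 ⟨-(u * n), by ring⟩
  exact hν.elim (fun h => hr _ (hshift.trans h)) (fun h => hs _ (hshift.trans h))

theorem stmt_13_general (a : Fin 3 → ℤ) (hst : Is2Stable a)
    (u : ℤ) (hu : Odd u) (l : ℤ) :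
    ∃ ν : ℕ, ν ≤ 2 ∧ ∀ n : ℤ, diagRep 2 a (u * (4 * n + ν) + l) :=
  have ⟨_, _, hrs, hr, hs⟩ := hst.exists_two_classes_mod_four
  exists_forall_of_two_classes_mod_four hrs hr hs hu l

/-- for a 2-stable diagonal ternary lattice `K`, odd `u` and any `l`,
some residue class `u(4n+ν)+l`, `ν ∈ {0,1,2}`, is entirely represented by `K` over `ℤ₂`. -/
theorem stmt_13 (a : Fin 3 → ℤ) (ha : ∀ i, 0 < a i) (hst : Is2Stable a)
    (u : ℤ) (hu : Odd u) (l : ℤ) :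
    ∃ ν : ℕ, ν ≤ 2 ∧ ∀ n : ℤ, diagRep 2 a (u * (4 * n + ν) + l) :=
  stmt_13_general a hst u hu l
end

section
/- Let p > 3 be prime, u a positive integer coprime to p, and a₁,a₂,a₃,α₁,α₂,α₃ positive integers such that the ℤ_p-lattice ⟨a₁,a₂,a₃⟩ is isometric to ⟨1,-Δ_p⟩ ⊥ ⟨pε_p⟩ for some unit ε_p ∈ ℤ_p^×. Then there exists an integer v with 0 < v < p² such that: uv + a₁α₁² + a₂α₂² is not represented by ⟨a₁,a₂⟩ over ℤ_p; uv + a₁α₁² + a₂α₂² + a₃α₃² is represented by ⟨a₁,a₂,a₃⟩ over ℤ_p; and both ord_p(uv + a₁α₁² + a₂α₂²) ≤ 1 and ord_p(uv + a₁α₁² + a₂α₂² + a₃α₃²) ≤ 1. -/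
/-!
The Gram determinant of the basis realising `⟨a₁, a₂, a₃⟩ ≅ ⟨1, -Δ⟩ ⊥ ⟨pε⟩` shows that `p`
divides `a₁a₂a₃` exactly once. Hensel's lemma turns nonzero squares mod `p` into squares of
`ℤ_p`, so `⟨1, -Δ⟩` represents every unit and `⟨pε⟩` represents `pε` times every unit square.

If `p` divides `a₁` or `a₂`, every unit value of `⟨a₁, a₂⟩` is `a₁ + a₂` times a square mod `p`;
choose `v` so that `N₁ = uv + a₁α₁² + a₂α₂²` is `a₁ + a₂` times a nonsquare mod `p` while
`N₂ = N₁ + a₃α₃²` stays a unit. Otherwise `p ∣ a₃`, and Lagrange's identity mod `p` gives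
`-Δ ≡ a₁a₂ D²`, so `⟨a₁, a₂⟩` is anisotropic mod `p` and represents no number of order exactly
one; choose `v` so that `N₁` has order one and `N₂ = pε · (unit square)`.
-/

open scoped BigOperators

namespace ZMod

variable {p : ℕ} [Fact p.Prime]

theorem two_ne_zero_of_ne (hp : p ≠ 2) : (2 : ZMod p) ≠ 0 :=
  Ring.two_ne_zero (by rwa [ringChar_zmod_n])

theorem ne_or_four_mul_ne (hp : 3 < p) {y : ZMod p} (hy : y ≠ 0) (r : ZMod p) :
    y ≠ r ∨ 4 * y ≠ r := by
  by_contra! h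
  have h3 : (3 : ZMod p) ≠ 0 := fun h3 ↦
    absurd (Nat.le_of_dvd three_pos ((natCast_eq_zero_iff 3 p).mp h3)) (by omega)
  exact mul_ne_zero h3 hy (by linear_combination h.2 - h.1)

theorem exists_nonsquare_mul_ne (hp : 3 < p) {K : ZMod p} (hK : K ≠ 0) (r : ZMod p) :
    ∃ s : ZMod p, ¬IsSquare s ∧ K * s ≠ r := by
  obtain ⟨n, hn⟩ := FiniteField.exists_nonsquare (F := ZMod p) (by rw [ringChar_zmod_n]; omega)
  have hn0 : n ≠ 0 := by rintro rfl; exact hn ⟨0, by ring⟩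
  have h2 : (2 : ZMod p) ≠ 0 := two_ne_zero_of_ne (by omega)
  have h4n : ¬IsSquare (4 * n) := by
    rintro ⟨t, ht⟩
    exact hn ⟨t / 2, by field_simp; linear_combination ht⟩
  rcases ne_or_four_mul_ne hp (mul_ne_zero hK hn0) r with h | h
  · exact ⟨n, hn, h⟩
  · exact ⟨4 * n, h4n, by rwa [mul_left_comm]⟩

theorem exists_mul_sq_ne (hp : 3 < p) {e : ZMod p} (he : e ≠ 0) (r : ZMod p) :
    ∃ w : ZMod p, w ≠ 0 ∧ e * w ^ 2 ≠ r := by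
  rcases ne_or_four_mul_ne hp he r with h | h
  · exact ⟨1, one_ne_zero, by rwa [one_pow, mul_one]⟩
  · refine ⟨2, two_ne_zero_of_ne (by omega), ?_⟩
    rwa [mul_comm, show (2 : ZMod p) ^ 2 = 4 by norm_num]

end ZMod

namespace PadicInt

variable {p : ℕ} [Fact p.Prime]

theorem toZMod_eq_zero_iff {x : ℤ_[p]} : toZMod x = 0 ↔ (p : ℤ_[p]) ∣ x := by
  rw [← RingHom.mem_ker, ker_toZMod, maximalIdeal_eq_span_p, Ideal.mem_span_singleton]

theorem isUnit_iff_toZMod_ne_zero {x : ℤ_[p]} : IsUnit x ↔ toZMod x ≠ 0 := by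
  rw [← IsLocalRing.notMem_maximalIdeal, ← ker_toZMod, RingHom.mem_ker]

theorem isSquare_of_isSquare_toZMod_s15 (hp : p ≠ 2) {x : ℤ_[p]} (hx : toZMod x ≠ 0)
    (h : IsSquare (toZMod x)) : IsSquare x := by
  obtain ⟨s, hs⟩ := h
  obtain ⟨a, rfl⟩ := ZMod.ringHom_surjective toZMod s
  have ha : toZMod a ≠ 0 := fun h ↦ hx (by simpa [h] using hs)
  have hderiv : ‖(2 * a : ℤ_[p])‖ = 1 := isUnit_iff.mp <| isUnit_iff_toZMod_ne_zero.mpr <| by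
    simpa [map_ofNat] using ⟨ZMod.two_ne_zero_of_ne hp, ha⟩
  have hval : ‖a ^ 2 - x‖ < 1 := by
    rw [norm_lt_one_iff_dvd, ← toZMod_eq_zero_iff, map_sub, map_pow, hs, sq, sub_self]
  obtain ⟨z, hz, -⟩ := hensels_lemma (F := Polynomial.X ^ 2 - Polynomial.C x) (a := a)
    (by simp [one_add_one_eq_two, hderiv, hval])
  exact ⟨z, by simpa [sub_eq_zero, sq, eq_comm] using hz⟩

theorem not_isSquare_toZMod (hp : p ≠ 2) (Δ : ℤ_[p]ˣ) (hΔ : ¬IsSquare (Δ : ℤ_[p])) :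
    ¬IsSquare (toZMod (Δ : ℤ_[p])) :=
  fun h ↦ hΔ (isSquare_of_isSquare_toZMod_s15 hp (isUnit_iff_toZMod_ne_zero.mp Δ.isUnit) h)

theorem exists_sq_sub_mul_sq_eq_s15 (hp : p ≠ 2) (Δ : ℤ_[p]ˣ) {n : ℤ_[p]} (hn : IsUnit n) :
    ∃ A B : ℤ_[p], A ^ 2 - Δ * B ^ 2 = n := by
  have hn0 := isUnit_iff_toZMod_ne_zero.mp hn
  have hΔ0 := isUnit_iff_toZMod_ne_zero.mp Δ.isUnit
  obtain ⟨a, b, hab⟩ : ∃ a b : ZMod p, a ^ 2 - toZMod n + -toZMod (Δ : ℤ_[p]) * b ^ 2 = 0 := by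
    simpa using FiniteField.exists_root_sum_quadratic
      (Polynomial.degree_X_pow_sub_C two_pos (toZMod n))
      (Polynomial.degree_C_mul_X_pow 2 (neg_ne_zero.mpr hΔ0))
      (by rw [ZMod.card]; exact Nat.odd_iff.mp ((Fact.out : p.Prime).odd_of_ne_two hp))
  obtain ⟨β, rfl⟩ := ZMod.ringHom_surjective toZMod b
  by_cases ha : a = 0
  · -- then `n ≡ -Δβ²`, so `-n / Δ` is a unit square
    subst ha
    have hinv : toZMod (↑Δ⁻¹ : ℤ_[p]) * toZMod (Δ : ℤ_[p]) = 1 := by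
      rw [← map_mul, Units.inv_mul, map_one]
    obtain ⟨B, hB⟩ : IsSquare (-n * ↑Δ⁻¹) := by
      refine isSquare_of_isSquare_toZMod_s15 hp ?_ ⟨toZMod β, ?_⟩ <;> rw [map_mul, map_neg]
      · exact mul_ne_zero (neg_ne_zero.mpr hn0) (isUnit_iff_toZMod_ne_zero.mp Δ⁻¹.isUnit)
      · linear_combination toZMod (↑Δ⁻¹ : ℤ_[p]) * hab + toZMod β ^ 2 * hinv
    exact ⟨0, B, by linear_combination (Δ : ℤ_[p]) * hB + n * Δ.mul_inv⟩
  · obtain ⟨A, hA⟩ : IsSquare (n + Δ * β ^ 2) := by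
      refine isSquare_of_isSquare_toZMod_s15 hp ?_ ⟨a, ?_⟩ <;> rw [map_add, map_mul, map_pow]
      · rw [show toZMod n + toZMod (Δ : ℤ_[p]) * toZMod β ^ 2 = a ^ 2 by linear_combination -hab]
        exact pow_ne_zero 2 ha
      · linear_combination -hab
    exact ⟨A, β, by linear_combination -hA⟩

end PadicInt

open PadicInt

theorem Int.exists_pos_le_dvd_mul_sub {n u : ℤ} (hn : 0 < n) (hu : IsCoprime u n) (T : ℤ) :
    ∃ v : ℤ, 0 < v ∧ v ≤ n ∧ n ∣ u * v - T := by
  obtain ⟨x, y, hxy⟩ := hu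
  have h0 := Int.emod_nonneg (T * x - 1) hn.ne'
  have hlt := Int.emod_lt_of_pos (T * x - 1) hn
  refine ⟨(T * x - 1) % n + 1, by omega, by omega, -T * y - u * ((T * x - 1) / n), ?_⟩
  rw [Int.emod_def]
  linear_combination T * hxy

theorem padicValInt_le_one_of_not_sq_dvd {p : ℕ} [Fact p.Prime] {N : ℤ}
    (h : ¬(p : ℤ) ^ 2 ∣ N) : padicValInt p N ≤ 1 := by
  by_contra! h'
  exact h ((padicValInt_dvd_iff 2 N).mpr (Or.inr h'))

section BinaryForm

variable {p : ℕ} [Fact p.Prime] {a₁ a₂ : ℤ}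

theorem not_exists_of_eq_mul_nonsquare (h : (a₁ : ZMod p) = 0 ∨ (a₂ : ZMod p) = 0)
    (hK : (a₁ : ZMod p) + a₂ ≠ 0) {s : ZMod p} (hs : ¬IsSquare s) {N : ℤ}
    (hN : (N : ZMod p) = (a₁ + a₂) * s) :
    ¬∃ x y : ℤ_[p], (a₁ : ℤ_[p]) * x ^ 2 + (a₂ : ℤ_[p]) * y ^ 2 = N := by
  rintro ⟨x, y, hxy⟩
  have hmod := congrArg toZMod hxy
  simp only [map_add, map_mul, map_pow, map_intCast, hN] at hmod
  rcases h with h | h <;> rw [h] at hK hmod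
  · exact hs ⟨toZMod y, mul_left_cancel₀ hK (by linear_combination -hmod)⟩
  · exact hs ⟨toZMod x, mul_left_cancel₀ hK (by linear_combination -hmod)⟩

theorem sq_dvd_of_dvd_of_not_isSquare_neg_mul (hns : ¬IsSquare (-((a₁ : ZMod p) * a₂)))
    {x y : ℤ_[p]} {N : ℤ} (hxy : (a₁ : ℤ_[p]) * x ^ 2 + (a₂ : ℤ_[p]) * y ^ 2 = N)
    (hN : (p : ℤ) ∣ N) : (p : ℤ) ^ 2 ∣ N := by
  have hmod : (a₁ : ZMod p) * toZMod x ^ 2 + a₂ * toZMod y ^ 2 = 0 := by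
    have := congrArg toZMod hxy
    simp only [map_add, map_mul, map_pow, map_intCast] at this
    rwa [this, ZMod.intCast_zmod_eq_zero_iff_dvd]
  have ha₁ : (a₁ : ZMod p) ≠ 0 := by rintro h; exact hns ⟨0, by simp [h]⟩
  -- a nonzero `ȳ` would exhibit `-a₁a₂` as the square of `a₁x̄ / ȳ`
  have hy : toZMod y = 0 := by
    by_contra hy
    exact hns ⟨a₁ * toZMod x / toZMod y, by field_simp; linear_combination -hmod⟩
  have hx : toZMod x = 0 := by
    rw [hy] at hmod
    simpa [ha₁] using hmod
  obtain ⟨x', rfl⟩ := toZMod_eq_zero_iff.mp hx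
  obtain ⟨y', rfl⟩ := toZMod_eq_zero_iff.mp hy
  exact_mod_cast (pow_p_dvd_int_iff 2 N).mp
    ⟨(a₁ : ℤ_[p]) * x' ^ 2 + (a₂ : ℤ_[p]) * y' ^ 2, by rw [← hxy]; ring⟩

end BinaryForm

section TernaryForm

variable {p : ℕ} [Fact p.Prime] {a : Fin 3 → ℤ}

theorem diagB_comm (x y : Fin 3 → ℤ_[p]) : diagB p a x y = diagB p a y x :=
  Finset.sum_congr rfl fun _ _ ↦ by ring

theorem of_mul_diagonal_mul_transpose_apply (v : Fin 3 → Fin 3 → ℤ_[p]) (i j : Fin 3) :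
    (Matrix.of v * Matrix.diagonal (fun k ↦ (a k : ℤ_[p])) * (Matrix.of v).transpose) i j =
      diagB p a (v i) (v j) := by
  rw [Matrix.mul_apply]
  simp only [Matrix.mul_diagonal, Matrix.transpose_apply, Matrix.of_apply, diagB]
  exact Finset.sum_congr rfl fun _ _ ↦ by ring

theorem diagRep_of_diagB_eq {ξ : Fin 3 → ℤ_[p]} {N : ℤ} (h : diagB p a ξ ξ = N) :
    diagRep p a N :=
  ⟨ξ, by simpa [diagB, sq, mul_assoc] using h⟩

theorem diagRep_cons_iff {a₁ a₂ a₃ N : ℤ} : diagRep p ![a₁, a₂, a₃] N ↔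
    ∃ x y z : ℤ_[p], (a₁ : ℤ_[p]) * x ^ 2 + (a₂ : ℤ_[p]) * y ^ 2 + (a₃ : ℤ_[p]) * z ^ 2 = N := by
  constructor
  · rintro ⟨ξ, h⟩
    exact ⟨ξ 0, ξ 1, ξ 2, by simpa [Fin.sum_univ_three] using h⟩
  · rintro ⟨x, y, z, h⟩
    exact ⟨![x, y, z], by simpa [Fin.sum_univ_three] using h⟩

/-- `x, y, z` is a basis of `ℤ_p³` in which `⟨a 0, a 1, a 2⟩` becomes `⟨1, -Δ⟩ ⊥ ⟨pε⟩`. -/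
def IsJordanBasis (p : ℕ) [Fact p.Prime] (a : Fin 3 → ℤ) (Δ ε : ℤ_[p]ˣ)
    (x y z : Fin 3 → ℤ_[p]) : Prop :=
  diagB p a x x = 1 ∧ diagB p a y y = -(Δ : ℤ_[p]) ∧
    diagB p a z z = (p : ℤ_[p]) * (ε : ℤ_[p]) ∧
    diagB p a x y = 0 ∧ diagB p a x z = 0 ∧ diagB p a y z = 0 ∧
    IsUnit (Matrix.det (Matrix.of ![x, y, z]))

namespace IsJordanBasis

variable {Δ ε : ℤ_[p]ˣ} {x y z : Fin 3 → ℤ_[p]} (hL : IsJordanBasis p a Δ ε x y z)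
include hL

theorem diagB_smul_add_smul_add_smul (A B C : ℤ_[p]) :
    diagB p a (A • x + B • y + C • z) (A • x + B • y + C • z) =
      A ^ 2 - Δ * B ^ 2 + p * ε * C ^ 2 := by
  obtain ⟨hxx, hyy, hzz, hxy, hxz, hyz, -⟩ := hL
  simp only [diagB, Fin.sum_univ_three, Pi.add_apply, Pi.smul_apply, smul_eq_mul] at *
  linear_combination A ^ 2 * hxx + B ^ 2 * hyy + C ^ 2 * hzz + 2 * A * B * hxy +
    2 * A * C * hxz + 2 * B * C * hyz

theorem diagRep_of_isUnit (hp : p ≠ 2) {N : ℤ} (hN : IsUnit (N : ℤ_[p])) : diagRep p a N := by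
  obtain ⟨A, B, h⟩ := exists_sq_sub_mul_sq_eq_s15 hp Δ hN
  exact diagRep_of_diagB_eq (ξ := A • x + B • y + (0 : ℤ_[p]) • z)
    (by rw [hL.diagB_smul_add_smul_add_smul, ← h]; ring)

theorem diagRep_p_mul (hp : p ≠ 2) {K : ℤ} {w : ZMod p} (hw : w ≠ 0)
    (hK : (K : ZMod p) = toZMod (ε : ℤ_[p]) * w ^ 2) : diagRep p a (p * K) := by
  have hεinv : toZMod (↑ε⁻¹ : ℤ_[p]) * toZMod (ε : ℤ_[p]) = 1 := by
    rw [← map_mul, Units.inv_mul, map_one]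
  obtain ⟨σ, hσ⟩ : IsSquare ((↑ε⁻¹ : ℤ_[p]) * (K : ℤ_[p])) := by
    have hres : toZMod ((↑ε⁻¹ : ℤ_[p]) * (K : ℤ_[p])) = w ^ 2 := by
      rw [map_mul, map_intCast, hK]; linear_combination w ^ 2 * hεinv
    exact isSquare_of_isSquare_toZMod_s15 hp (by rw [hres]; exact pow_ne_zero 2 hw)
      ⟨w, by rw [hres, sq]⟩
  refine diagRep_of_diagB_eq (ξ := (0 : ℤ_[p]) • x + (0 : ℤ_[p]) • y + σ • z) ?_
  rw [hL.diagB_smul_add_smul_add_smul]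
  push_cast
  linear_combination (p : ℤ_[p]) * ε * hσ.symm + (p : ℤ_[p]) * K * ε.mul_inv

theorem det_sq_mul_prod :
    (Matrix.of ![x, y, z]).det ^ 2 * (a 0 * a 1 * a 2 : ℤ_[p]) = -(p * Δ * ε) := by
  obtain ⟨hxx, hyy, hzz, hxy, hxz, hyz, -⟩ := hL
  have hgram : Matrix.of ![x, y, z] * Matrix.diagonal (fun i ↦ (a i : ℤ_[p])) *
      (Matrix.of ![x, y, z]).transpose = Matrix.diagonal ![1, -(Δ : ℤ_[p]), p * ε] := by
    ext i j
    rw [of_mul_diagonal_mul_transpose_apply]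
    fin_cases i <;> fin_cases j <;>
      simp [hxx, hyy, hzz, hxy, hxz, hyz, diagB_comm y x, diagB_comm z x, diagB_comm z y]
  have hdet := congrArg Matrix.det hgram
  simp only [Matrix.det_mul, Matrix.det_transpose, Matrix.det_diagonal, Fin.prod_univ_three,
    Matrix.cons_val_zero, Matrix.cons_val_one, Matrix.cons_val_two, Matrix.head_cons,
    Matrix.tail_cons] at hdet
  linear_combination hdet

theorem prime_dvd_prod : (p : ℤ) ∣ a 0 * a 1 * a 2 := by
  have h : (p : ℤ_[p]) ∣ (Matrix.of ![x, y, z]).det ^ 2 * (a 0 * a 1 * a 2 : ℤ_[p]) :=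
    ⟨-(Δ * ε), by rw [hL.det_sq_mul_prod]; ring⟩
  obtain ⟨-, -, -, -, -, -, hunit⟩ := hL
  rw [(hunit.pow 2).dvd_mul_left] at h
  simpa using (pow_p_dvd_int_iff 1 _).mp (by simpa using h)

theorem not_sq_dvd_prod : ¬(p : ℤ) ^ 2 ∣ a 0 * a 1 * a 2 := by
  intro h
  obtain ⟨k, hk⟩ := (pow_p_dvd_int_iff 2 _).mpr (by exact_mod_cast h)
  push_cast at hk
  have hdvd : (p : ℤ_[p]) * p ∣ p * (Δ * ε) :=
    ⟨-((Matrix.of ![x, y, z]).det ^ 2 * k), by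
      linear_combination hL.det_sq_mul_prod - (Matrix.of ![x, y, z]).det ^ 2 * hk⟩
  exact prime_p.not_isUnit (isUnit_of_dvd_unit
    ((mul_dvd_mul_iff_left prime_p.ne_zero).mp hdvd) (Δ * ε).isUnit)

theorem not_isSquare_neg_mul (hp : p ≠ 2) (hΔ : ¬IsSquare (Δ : ℤ_[p])) (ha : (p : ℤ) ∣ a 2) :
    ¬IsSquare (-((a 0 : ZMod p) * a 1)) := by
  obtain ⟨hxx, hyy, -, hxy, -⟩ := hL
  simp only [diagB, Fin.sum_univ_three] at hxx hyy hxy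
  -- Lagrange's identity `Q(x) Q(y) - B(x, y)² = ∑_{i<j} aᵢaⱼ (xᵢyⱼ - xⱼyᵢ)²`
  have hlagrange : -(Δ : ℤ_[p]) = a 0 * a 1 * (x 0 * y 1 - x 1 * y 0) ^ 2 +
      a 2 * (a 0 * (x 0 * y 2 - x 2 * y 0) ^ 2 + a 1 * (x 1 * y 2 - x 2 * y 1) ^ 2) := by
    linear_combination
      -(a 0 * y 0 * y 0 + a 1 * y 1 * y 1 + a 2 * y 2 * y 2 : ℤ_[p]) * hxx - hyy +
        (a 0 * x 0 * y 0 + a 1 * x 1 * y 1 + a 2 * x 2 * y 2 : ℤ_[p]) * hxy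
  have ha2 : (a 2 : ZMod p) = 0 := (ZMod.intCast_zmod_eq_zero_iff_dvd _ _).mpr ha
  have hmod := congrArg toZMod hlagrange
  simp only [map_neg, map_add, map_mul, map_pow, map_sub, map_intCast, ha2, zero_mul,
    add_zero] at hmod
  set D := toZMod (x 0) * toZMod (y 1) - toZMod (x 1) * toZMod (y 0)
  rintro ⟨t, ht⟩
  exact not_isSquare_toZMod hp Δ hΔ ⟨t * D, by linear_combination -hmod + D ^ 2 * ht⟩

end IsJordanBasis

end TernaryForm

def IsAdmissibleShift (p : ℕ) [Fact p.Prime] (u a₁ a₂ a₃ α₁ α₂ α₃ v : ℤ) : Prop :=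
  0 < v ∧ v < (p : ℤ) ^ 2 ∧
    ¬(∃ x y : ℤ_[p],
        (a₁ : ℤ_[p]) * x ^ 2 + (a₂ : ℤ_[p]) * y ^ 2 =
          ((u * v + a₁ * α₁ ^ 2 + a₂ * α₂ ^ 2 : ℤ) : ℤ_[p])) ∧
    (∃ x y z : ℤ_[p],
        (a₁ : ℤ_[p]) * x ^ 2 + (a₂ : ℤ_[p]) * y ^ 2 + (a₃ : ℤ_[p]) * z ^ 2 =
          ((u * v + a₁ * α₁ ^ 2 + a₂ * α₂ ^ 2 + a₃ * α₃ ^ 2 : ℤ) : ℤ_[p])) ∧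
    max (padicValInt p (u * v + a₁ * α₁ ^ 2 + a₂ * α₂ ^ 2))
        (padicValInt p (u * v + a₁ * α₁ ^ 2 + a₂ * α₂ ^ 2 + a₃ * α₃ ^ 2)) ≤ 1

section AdmissibleShift

variable {p : ℕ} [Fact p.Prime] {u a₁ a₂ a₃ : ℤ} {Δ ε : ℤ_[p]ˣ} {x y z : Fin 3 → ℤ_[p]}

theorem exists_isAdmissibleShift_of_dvd_mul (hp : 3 < p) (hup : IsCoprime u p)
    (α₁ α₂ α₃ : ℤ) (hL : IsJordanBasis p ![a₁, a₂, a₃] Δ ε x y z) (h12 : (p : ℤ) ∣ a₁ * a₂) :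
    ∃ v, IsAdmissibleShift p u a₁ a₂ a₃ α₁ α₂ α₃ v := by
  have hzero : (a₁ : ZMod p) = 0 ∨ (a₂ : ZMod p) = 0 :=
    mul_eq_zero.mp (by exact_mod_cast (ZMod.intCast_zmod_eq_zero_iff_dvd _ p).mpr h12)
  have hK : (a₁ : ZMod p) + a₂ ≠ 0 := by
    intro hK
    have h1 : (a₁ : ZMod p) = 0 := by
      rcases hzero with h | h
      · exact h
      · linear_combination hK - h
    have h2 : (a₂ : ZMod p) = 0 := by linear_combination hK - h1
    rw [ZMod.intCast_zmod_eq_zero_iff_dvd] at h1 h2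
    exact hL.not_sq_dvd_prod (dvd_mul_of_dvd_left (sq (p : ℤ) ▸ mul_dvd_mul h1 h2) _)
  obtain ⟨s, hs, hsd⟩ := ZMod.exists_nonsquare_mul_ne hp hK (-(a₃ * α₃ ^ 2 : ℤ))
  obtain ⟨τ, hτ⟩ := ZMod.intCast_surjective
    ((a₁ + a₂ : ZMod p) * s - ((a₁ * α₁ ^ 2 + a₂ * α₂ ^ 2 : ℤ) : ZMod p))
  obtain ⟨v, hv0, hvp, hvd⟩ := Int.exists_pos_le_dvd_mul_sub (by positivity) hup τ
  have huv : ((u * v : ℤ) : ZMod p) = τ := by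
    rwa [← sub_eq_zero, ← Int.cast_sub, ZMod.intCast_zmod_eq_zero_iff_dvd]
  have hN₁ : ((u * v + a₁ * α₁ ^ 2 + a₂ * α₂ ^ 2 : ℤ) : ZMod p) = (a₁ + a₂) * s := by
    push_cast at huv hτ ⊢; rw [huv, hτ]; ring
  have hN₁' : ((u * v + a₁ * α₁ ^ 2 + a₂ * α₂ ^ 2 : ℤ) : ZMod p) ≠ 0 := by
    rw [hN₁]; exact mul_ne_zero hK (by rintro rfl; exact hs ⟨0, by ring⟩)
  have hN₂ : ((u * v + a₁ * α₁ ^ 2 + a₂ * α₂ ^ 2 + a₃ * α₃ ^ 2 : ℤ) : ZMod p) ≠ 0 := by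
    push_cast at hN₁ hsd ⊢
    rw [hN₁]
    exact fun h ↦ hsd (by linear_combination h)
  have hval {N : ℤ} (hN : (N : ZMod p) ≠ 0) : padicValInt p N ≤ 1 := by
    rw [padicValInt.eq_zero_of_not_dvd (mt (ZMod.intCast_zmod_eq_zero_iff_dvd _ p).mpr hN)]
    exact zero_le_one
  have hp1 : (1 : ℤ) < p := by exact_mod_cast (Fact.out : p.Prime).one_lt
  refine ⟨v, hv0, by nlinarith, not_exists_of_eq_mul_nonsquare hzero hK hs hN₁,
    diagRep_cons_iff.mp (hL.diagRep_of_isUnit (by omega) ?_), max_le (hval hN₁') (hval hN₂)⟩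
  rwa [isUnit_iff_toZMod_ne_zero, map_intCast]

theorem exists_isAdmissibleShift_of_not_dvd_mul (hp : 3 < p) (hup : IsCoprime u p)
    (α₁ α₂ α₃ : ℤ) (hΔ : ¬IsSquare (Δ : ℤ_[p])) (hL : IsJordanBasis p ![a₁, a₂, a₃] Δ ε x y z)
    (h12 : ¬(p : ℤ) ∣ a₁ * a₂) :
    ∃ v, IsAdmissibleShift p u a₁ a₂ a₃ α₁ α₂ α₃ v := by
  have hpZ : Prime (p : ℤ) := Nat.prime_iff_prime_int.mp Fact.out
  have ha₃ : (p : ℤ) ∣ a₃ := (hpZ.dvd_or_dvd hL.prime_dvd_prod).resolve_left h12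
  have hns : ¬IsSquare (-((a₁ : ZMod p) * a₂)) := hL.not_isSquare_neg_mul (by omega) hΔ ha₃
  have hε := isUnit_iff_toZMod_ne_zero.mp ε.isUnit
  obtain ⟨d, hd⟩ : (p : ℤ) ∣ a₃ * α₃ ^ 2 := dvd_mul_of_dvd_left ha₃ _
  obtain ⟨w, hw, hwd⟩ := ZMod.exists_mul_sq_ne hp hε (d : ZMod p)
  obtain ⟨τ, hτ⟩ := ZMod.intCast_surjective (toZMod (ε : ℤ_[p]) * w ^ 2 - (d : ZMod p))
  obtain ⟨v, hv0, hvp, k, hk⟩ := Int.exists_pos_le_dvd_mul_sub (by positivity)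
    (hup.pow_right (n := 2)) (p * τ - (a₁ * α₁ ^ 2 + a₂ * α₂ ^ 2))
  have hN₁ : u * v + a₁ * α₁ ^ 2 + a₂ * α₂ ^ 2 = p * (τ + p * k) := by linear_combination hk
  have hN₂ : u * v + a₁ * α₁ ^ 2 + a₂ * α₂ ^ 2 + a₃ * α₃ ^ 2 = p * (τ + p * k + d) := by
    linear_combination hk + hd
  have hK₁ : ((τ + p * k : ℤ) : ZMod p) ≠ 0 := by
    push_cast; rw [hτ, ZMod.natCast_self, zero_mul, add_zero]; exact sub_ne_zero.mpr hwd
  have hK₂ : ((τ + p * k + d : ℤ) : ZMod p) = toZMod (ε : ℤ_[p]) * w ^ 2 := by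
    push_cast; rw [hτ, ZMod.natCast_self]; ring
  have hsq {K : ℤ} (hK : (K : ZMod p) ≠ 0) : ¬(p : ℤ) ^ 2 ∣ p * K := by
    rwa [sq, mul_dvd_mul_iff_left hpZ.ne_zero, ← ZMod.intCast_zmod_eq_zero_iff_dvd]
  have hsq₁ := hN₁ ▸ hsq hK₁
  have hsq₂ := hN₂ ▸ hsq (hK₂ ▸ mul_ne_zero hε (pow_ne_zero 2 hw))
  -- `v = p²` is impossible: `a₁α₁² + a₂α₂²` would be divisible by `p` but not by `p²`
  have hv : v ≠ p ^ 2 := by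
    rintro rfl
    have hc : a₁ * α₁ ^ 2 + a₂ * α₂ ^ 2 = p * (τ + p * k - u * p) := by linear_combination hN₁
    have hc2 := sq_dvd_of_dvd_of_not_isSquare_neg_mul hns (x := α₁) (y := α₂)
      (by push_cast; ring) ⟨_, hc⟩
    exact hsq₁ (by simpa only [← add_assoc] using dvd_add (dvd_mul_left _ u) hc2)
  refine ⟨v, hv0, lt_of_le_of_ne hvp hv,
    fun ⟨x, y, hxy⟩ ↦ hsq₁ (sq_dvd_of_dvd_of_not_isSquare_neg_mul hns hxy ⟨_, hN₁⟩),
    diagRep_cons_iff.mp ?_, max_le (padicValInt_le_one_of_not_sq_dvd hsq₁)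
      (padicValInt_le_one_of_not_sq_dvd hsq₂)⟩
  rw [hN₂]
  exact_mod_cast hL.diagRep_p_mul (by omega) hw hK₂

end AdmissibleShift

theorem stmt_15_general (p : ℕ) [Fact (Nat.Prime p)] (hp : 3 < p)
    (u : ℤ) (hup : IsCoprime u (p : ℤ))
    (a₁ a₂ a₃ α₁ α₂ α₃ : ℤ)
    (hiso : ∃ Δ ε : ℤ_[p]ˣ, ¬ IsSquare (Δ : ℤ_[p]) ∧
      ∃ x y z : Fin 3 → ℤ_[p],
        diagB p ![a₁, a₂, a₃] x x = 1 ∧ diagB p ![a₁, a₂, a₃] y y = -(Δ : ℤ_[p]) ∧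
        diagB p ![a₁, a₂, a₃] z z = (p : ℤ_[p]) * (ε : ℤ_[p]) ∧
        diagB p ![a₁, a₂, a₃] x y = 0 ∧ diagB p ![a₁, a₂, a₃] x z = 0 ∧
        diagB p ![a₁, a₂, a₃] y z = 0 ∧
        IsUnit (Matrix.det (Matrix.of ![x, y, z]))) :
    ∃ v : ℤ, 0 < v ∧ v < (p : ℤ) ^ 2 ∧
      ¬ (∃ x y : ℤ_[p],
          (a₁ : ℤ_[p]) * x ^ 2 + (a₂ : ℤ_[p]) * y ^ 2 =
            ((u * v + a₁ * α₁ ^ 2 + a₂ * α₂ ^ 2 : ℤ) : ℤ_[p])) ∧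
      (∃ x y z : ℤ_[p],
          (a₁ : ℤ_[p]) * x ^ 2 + (a₂ : ℤ_[p]) * y ^ 2 + (a₃ : ℤ_[p]) * z ^ 2 =
            ((u * v + a₁ * α₁ ^ 2 + a₂ * α₂ ^ 2 + a₃ * α₃ ^ 2 : ℤ) : ℤ_[p])) ∧
      max (padicValInt p (u * v + a₁ * α₁ ^ 2 + a₂ * α₂ ^ 2))
          (padicValInt p (u * v + a₁ * α₁ ^ 2 + a₂ * α₂ ^ 2 + a₃ * α₃ ^ 2)) ≤ 1 := by
  obtain ⟨Δ, ε, hΔ, x, y, z, hL⟩ := hiso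
  by_cases h12 : (p : ℤ) ∣ a₁ * a₂
  · exact exists_isAdmissibleShift_of_dvd_mul hp hup α₁ α₂ α₃ hL h12
  · exact exists_isAdmissibleShift_of_not_dvd_mul hp hup α₁ α₂ α₃ hΔ hL h12

/-- existence of a suitable `v` with `0 < v < p²` for an anisotropic
`p`-stable diagonal ternary lattice `⟨a₁,a₂,a₃⟩ ≅ ⟨1,-Δ_p⟩ ⊥ ⟨pε_p⟩` over `ℤ_p`. -/
theorem stmt_15 (p : ℕ) [Fact (Nat.Prime p)] (hp : 3 < p)
    (u : ℤ) (hu : 0 < u) (hup : IsCoprime u (p : ℤ))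
    (a₁ a₂ a₃ α₁ α₂ α₃ : ℤ)
    (ha : 0 < a₁ ∧ 0 < a₂ ∧ 0 < a₃) (hα : 0 < α₁ ∧ 0 < α₂ ∧ 0 < α₃)
    (hiso : ∃ Δ ε : ℤ_[p]ˣ, ¬ IsSquare (Δ : ℤ_[p]) ∧
      ∃ x y z : Fin 3 → ℤ_[p],
        diagB p ![a₁, a₂, a₃] x x = 1 ∧ diagB p ![a₁, a₂, a₃] y y = -(Δ : ℤ_[p]) ∧
        diagB p ![a₁, a₂, a₃] z z = (p : ℤ_[p]) * (ε : ℤ_[p]) ∧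
        diagB p ![a₁, a₂, a₃] x y = 0 ∧ diagB p ![a₁, a₂, a₃] x z = 0 ∧
        diagB p ![a₁, a₂, a₃] y z = 0 ∧
        IsUnit (Matrix.det (Matrix.of ![x, y, z]))) :
    ∃ v : ℤ, 0 < v ∧ v < (p : ℤ) ^ 2 ∧
      ¬ (∃ x y : ℤ_[p],
          (a₁ : ℤ_[p]) * x ^ 2 + (a₂ : ℤ_[p]) * y ^ 2 =
            ((u * v + a₁ * α₁ ^ 2 + a₂ * α₂ ^ 2 : ℤ) : ℤ_[p])) ∧
      (∃ x y z : ℤ_[p],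
          (a₁ : ℤ_[p]) * x ^ 2 + (a₂ : ℤ_[p]) * y ^ 2 + (a₃ : ℤ_[p]) * z ^ 2 =
            ((u * v + a₁ * α₁ ^ 2 + a₂ * α₂ ^ 2 + a₃ * α₃ ^ 2 : ℤ) : ℤ_[p])) ∧
      max (padicValInt p (u * v + a₁ * α₁ ^ 2 + a₂ * α₂ ^ 2))
          (padicValInt p (u * v + a₁ * α₁ ^ 2 + a₂ * α₂ ^ 2 + a₃ * α₃ ^ 2)) ≤ 1 :=
  stmt_15_general p hp u hup a₁ a₂ a₃ α₁ α₂ α₃ hiso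
end

section
/- Let p be an odd prime. Define ψ_p(p^s) = (p^s+p+2)/(2p+2) for s odd and (p^s+2p+1)/(2p+2) for s even, and for n with base-p expansion n = Σ b_s p^s define ψ_p(n) = Σ_{s≥1} b_s ψ_p(p^s), plus 1 if b₀ ≠ 0. Then for every prime p > 3 and every positive integer n, ψ_p(n) ≤ ⌈n/p⌉, and for fixed n the set of primes p > 3 with ψ_p(n) > 1 is finite. -/
open scoped BigOperators

/-- `ψ_p(p^s)`. -/
noncomputable def psiTerm (p s : ℕ) : ℚ :=
  if Odd s then ((p : ℚ) ^ s + p + 2) / (2 * p + 2)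
  else ((p : ℚ) ^ s + 2 * p + 1) / (2 * p + 2)

/-- `ψ_p(n) = Σ_{s ≥ 1} b_s ψ_p(p^s)` (base-`p` digits `b_s = n / p^s % p`),
plus 1 if the last digit `b₀ = n % p` is nonzero. -/
noncomputable def psi (p n : ℕ) : ℚ :=
  (if n % p ≠ 0 then 1 else 0) +
    ∑ s ∈ Finset.Icc 1 (Nat.log p n), ((n / p ^ s % p : ℕ) : ℚ) * psiTerm p s

/-!
Each weight `ψ_p(p^s)` is at most `p^(s-1)`, so `Σ_{s ≥ 1} b_s ψ_p(p^s)` is at most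
`Σ_{s ≥ 1} b_s p^(s-1) = ⌊n/p⌋`, and the extra 1 for `b₀ ≠ 0` is exactly the gap between
`⌊n/p⌋` and `⌈n/p⌉`. For `p > n` this gives `ψ_p(n) ≤ ⌈n/p⌉ ≤ 1`, hence finiteness.
-/

open Finset

lemma psiTerm_le_pow_pred {p s : ℕ} (hp : 1 < p) (hs : 1 ≤ s) :
    psiTerm p s ≤ (p : ℚ) ^ (s - 1) := by
  have hp' : (2 : ℚ) ≤ p := by exact_mod_cast hp
  have hden : (0 : ℚ) < 2 * p + 2 := by positivity
  obtain rfl | ⟨t, rfl⟩ : s = 1 ∨ ∃ t, s = t + 2 := by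
    rcases s with _ | _ | t <;> simp_all
  · rw [psiTerm, if_pos odd_one, div_le_iff₀ hden, Nat.sub_self, pow_zero, pow_one]
    linarith
  · have hnum : psiTerm p (t + 2) ≤ ((p : ℚ) ^ (t + 2) + 2 * p + 2) / (2 * p + 2) := by
      unfold psiTerm
      split_ifs <;> gcongr <;> linarith
    have hpow : (p : ℚ) ≤ p ^ (t + 1) := le_self_pow₀ (by linarith) (by omega)
    refine hnum.trans ((div_le_iff₀ hden).2 ?_)
    rw [show t + 2 - 1 = t + 1 by omega, pow_succ _ (t + 1)]
    nlinarith

lemma sum_Icc_div_pow_mod_mul_pow_pred (n p L : ℕ) :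
    ∑ s ∈ Icc 1 L, n / p ^ s % p * p ^ (s - 1) = n / p % p ^ L := by
  induction L with
  | zero => simp [Nat.mod_one]
  | succ L ih =>
    rw [sum_Icc_succ_top (by omega), ih, Nat.mod_pow_succ, pow_succ', ← Nat.div_div_eq_div_mul,
      Nat.add_sub_cancel, mul_comm]

lemma sum_Icc_log_div_pow_mod_mul_pow_pred {p : ℕ} (hp : 1 < p) (n : ℕ) :
    ∑ s ∈ Icc 1 (Nat.log p n), n / p ^ s % p * p ^ (s - 1) = n / p := by
  rw [sum_Icc_div_pow_mod_mul_pow_pred, Nat.mod_eq_of_lt]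
  rw [Nat.div_lt_iff_lt_mul (by omega), ← pow_succ]
  exact Nat.lt_pow_succ_log_self hp n

lemma natCast_div_add_ite_le_ceil {p : ℕ} (hp : 0 < p) (n : ℕ) :
    ((n / p : ℕ) : ℚ) + (if n % p ≠ 0 then 1 else 0) ≤ ⌈(n : ℚ) / p⌉ := by
  split_ifs with h
  · have hlt : ((n / p : ℕ) : ℤ) < ⌈(n : ℚ) / p⌉ := by
      rw [Int.lt_ceil, lt_div_iff₀ (by exact_mod_cast hp)]
      have := Nat.div_add_mod n p
      exact_mod_cast (by rw [mul_comm]; omega : n / p * p < n)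
    simpa only [Int.cast_add, Int.cast_one, Int.cast_natCast] using
      Int.cast_le (R := ℚ) |>.2 (Int.add_one_le_of_lt hlt)
  · rw [← Nat.cast_div (Nat.dvd_of_mod_eq_zero (not_not.1 h)) (by positivity), Int.ceil_natCast,
      Int.cast_natCast, add_zero]

lemma psi_le_ceil_div {p : ℕ} (hp : 1 < p) (n : ℕ) : psi p n ≤ ⌈(n : ℚ) / p⌉ := by
  have hsum : ∑ s ∈ Icc 1 (Nat.log p n), ((n / p ^ s % p : ℕ) : ℚ) * psiTerm p s
      ≤ ((n / p : ℕ) : ℚ) := by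
    calc _ ≤ ∑ s ∈ Icc 1 (Nat.log p n), ((n / p ^ s % p : ℕ) : ℚ) * (p : ℚ) ^ (s - 1) := by
          gcongr with s hs
          exact psiTerm_le_pow_pred hp (mem_Icc.1 hs).1
      _ = ((n / p : ℕ) : ℚ) := by
          rw [← sum_Icc_log_div_pow_mod_mul_pow_pred hp n]
          push_cast
          rfl
  have hceil := natCast_div_add_ite_le_ceil (by omega : 0 < p) n
  rw [psi]
  linarith

theorem stmt_19_general (n : ℕ) :
    (∀ p : ℕ, Nat.Prime p → 3 < p → psi p n ≤ (⌈(n : ℚ) / (p : ℚ)⌉ : ℚ)) ∧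
      {p : ℕ | Nat.Prime p ∧ 3 < p ∧ 1 < psi p n}.Finite := by
  refine ⟨fun p hp _ => psi_le_ceil_div hp.one_lt n, (Set.finite_Iic n).subset ?_⟩
  rintro p ⟨hp, -, hpsi⟩
  show p ≤ n
  by_contra! hnp
  have hceil : (⌈(n : ℚ) / p⌉ : ℚ) ≤ 1 := by
    rw [← Int.cast_one, Int.cast_le, Int.ceil_le, Int.cast_one,
      div_le_one (by exact_mod_cast hp.pos)]
    exact_mod_cast hnp.le
  linarith [psi_le_ceil_div hp.one_lt n]

/-- for every prime `p > 3`, `ψ_p(n) ≤ ⌈n/p⌉`, and for fixed `n`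
only finitely many primes `p > 3` have `ψ_p(n) > 1`. -/
theorem stmt_19 (n : ℕ) (hn : 0 < n) :
    (∀ p : ℕ, Nat.Prime p → 3 < p → psi p n ≤ (⌈(n : ℚ) / (p : ℚ)⌉ : ℚ)) ∧
      {p : ℕ | Nat.Prime p ∧ 3 < p ∧ 1 < psi p n}.Finite :=
  stmt_19_general n
end
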